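/- arXiv:1402.2014 — 6 statements merged into one kernel-verified Lean document; each statement's English description precedes it below -/
import Mathlib

section
/- Let 0 ≤ α < β ≤ 1. Then the function φ : ℝ → ℝ defined by φ(t) = H_β(e^t, 1) / H_α(e^t, 1) for t ≠ 0 and φ(0) = 1 is positive definite. (Explicitly, for 0 < α < β one has φ(t) = (β/α)·sinh(αt)/sinh(βt) for t ≠ 0, and for α = 0 one has φ(t) = βt/sinh(βt) for t ≠ 0.) -/
open scoped ComplexOrder

/-- Logarithmic mean. -/
noncomputable def LM (x y : ℝ) : ℝ :=
  if x = y then x else (x - y) / (Real.log x - Real.log y)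

/-- The mean `A_α`, with `A_0 = LM`. -/
noncomputable def Amean (α x y : ℝ) : ℝ :=
  if x = y then x else if α = 0 then LM x y
  else α * (x ^ α + y ^ α) * (x - y) / (2 * (x ^ α - y ^ α))

/-- The mean `G_α`, with `G_0 = LM`. -/
noncomputable def Gmean (α x y : ℝ) : ℝ :=
  if x = y then x else if α = 0 then LM x y
  else α * (x * y) ^ (α / 2) * (x - y) / (x ^ α - y ^ α)

/-- The mean `H_α`, with `H_0 = LM`. -/
noncomputable def Hmean (α x y : ℝ) : ℝ :=
  if x = y then x else if α = 0 then LM x y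
  else 2 * α * (x * y) ^ α * (x - y) / ((x ^ α + y ^ α) * (x ^ α - y ^ α))

/-- The power difference mean `M_α`. -/
noncomputable def Mmean (α x y : ℝ) : ℝ :=
  if x = y then x
  else ((α - 1) / α) * (x ^ α - y ^ α) / (x ^ (α - 1) - y ^ (α - 1))

/-- A continuous real function `φ` is positive definite if every matrix
`[φ(tᵢ - tⱼ)]` is positive semidefinite (as a complex matrix). -/
def IsPosDefFun (φ : ℝ → ℝ) : Prop :=
  Continuous φ ∧ ∀ (n : ℕ) (t : Fin n → ℝ),
    Matrix.PosSemidef (Matrix.of fun i j : Fin n => (φ (t i - t j) : ℂ))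

/-!
Put `sinhc x = sinh x / x`. Then `H_c(eᵗ, 1) = (eᵗ - 1) / (t sinhc (c t))`, so `φ(t) = ψ_γ(β t)`
with `γ = α / β` and `ψ_γ(s) = sinhc (γ s) / sinhc s`, and it suffices to show that `ψ_γ` is
positive definite for `0 ≤ γ < 1`.

For `0 < γ < 1` and `u, v > 0`, partial fractions and the scaling `x ↦ u x` give
`∫₀^∞ x^γ / ((u + x)(v + x)) dx = C_γ (u^γ - v^γ) / (u - v)`, `C_γ = ∫₀^∞ x^(γ-1) / (1 + x) dx`,
and by continuity the same holds on the diagonal with the derivative `γ u^(γ-1)`.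
For `u = e^{2a}`, `v = e^{2b}` the right-hand side is `γ C_γ e^{-(1-γ)(a+b)} ψ_γ(a - b)`,
so `[ψ_γ(tᵢ - tⱼ)]` is a Gram matrix in `L²(0, ∞)`. The case `γ = 0` follows by letting
`γ → 0`, since positive semidefinite matrices form a closed set.
-/

open MeasureTheory Real Set Filter Topology Matrix

theorem posSemidef_of_integral_mul {ι X : Type*} [Finite ι] [MeasurableSpace X] {μ : Measure X}
    {f : ι → X → ℝ} (hf : ∀ i, MemLp (f i) 2 μ) :
    (Matrix.of fun i j => ((∫ x, f i x * f j x ∂μ : ℝ) : ℂ)).PosSemidef := by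
  let v i : Lp ℂ 2 μ := ((hf i).ofReal (K := ℂ)).toLp
  have hv : Matrix.of (fun i j => ((∫ x, f i x * f j x ∂μ : ℝ) : ℂ)) = gram ℂ v := by
    ext i j
    rw [gram_apply, L2.inner_def, of_apply, ← integral_complex_ofReal]
    refine integral_congr_ae ?_
    filter_upwards [((hf i).ofReal (K := ℂ)).coeFn_toLp, ((hf j).ofReal (K := ℂ)).coeFn_toLp]
      with x hi hj
    rw [RCLike.inner_apply, hi, hj]
    simp [mul_comm]
  exact hv ▸ posSemidef_gram ℂ v

theorem isClosed_setOf_posSemidef {n : Type*} [Fintype n] :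
    IsClosed {M : Matrix n n ℂ | M.PosSemidef} := by
  simp only [posSemidef_iff_dotProduct_mulVec, ofPred_and, ofPred_forall]
  refine (isClosed_eq continuous_id.matrix_conjTranspose continuous_id).inter
    (isClosed_iInter fun x => isClosed_le continuous_const ?_)
  fun_prop

theorem IsPosDefFun.comp_mul {φ : ℝ → ℝ} (hφ : IsPosDefFun φ) (c : ℝ) :
    IsPosDefFun fun t => φ (c * t) :=
  ⟨hφ.1.comp (continuous_const.mul continuous_id), fun n t => by
    simpa only [mul_sub] using hφ.2 n fun i => c * t i⟩

theorem IsPosDefFun.of_tendsto {ι : Type*} {l : Filter ι} [l.NeBot] {φ : ι → ℝ → ℝ}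
    {ψ : ℝ → ℝ} (hψ : Continuous ψ) (hφ : ∀ᶠ k in l, IsPosDefFun (φ k))
    (hlim : ∀ t, Tendsto (fun k => φ k t) l (𝓝 (ψ t))) : IsPosDefFun ψ := by
  refine ⟨hψ, fun n t =>
    isClosed_setOf_posSemidef.mem_of_tendsto ?_ (hφ.mono fun k hk => hk.2 n t)⟩
  exact tendsto_pi_nhds.2 fun i => tendsto_pi_nhds.2 fun j =>
    (Complex.continuous_ofReal.tendsto _).comp (hlim _)

section RpowKernel

variable {γ u v : ℝ}

theorem integrableOn_rpow_sub_one_div_add (hγ0 : 0 < γ) (hγ1 : γ < 1) (hu : 0 < u) :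
    IntegrableOn (fun x : ℝ => x ^ (γ - 1) / (u + x)) (Ioi 0) := by
  have hmeas : Measurable fun x : ℝ => x ^ (γ - 1) / (u + x) := by fun_prop
  rw [← Ioc_union_Ioi_eq_Ioi zero_le_one, integrableOn_union]
  constructor
  · refine Integrable.mono' (((intervalIntegrable_iff_integrableOn_Ioc_of_le zero_le_one).1
      (intervalIntegral.intervalIntegrable_rpow' (by linarith : -1 < γ - 1))).div_const u)
      hmeas.aestronglyMeasurable ?_
    filter_upwards [ae_restrict_mem measurableSet_Ioc] with x hx
    rw [norm_of_nonneg (div_nonneg (rpow_nonneg hx.1.le _) (by linarith [hx.1]))]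
    exact div_le_div_of_nonneg_left (rpow_nonneg hx.1.le _) hu (by linarith [hx.1])
  · refine Integrable.mono' (integrableOn_Ioi_rpow_of_lt (by linarith : γ - 2 < -1) one_pos)
      hmeas.aestronglyMeasurable ?_
    filter_upwards [ae_restrict_mem measurableSet_Ioi] with x (hx : 1 < x)
    have hx0 : 0 < x := one_pos.trans hx
    calc ‖x ^ (γ - 1) / (u + x)‖ = x ^ (γ - 1) / (u + x) := norm_of_nonneg (by positivity)
      _ ≤ x ^ (γ - 1) / x := div_le_div_of_nonneg_left (by positivity) hx0 (by linarith)
      _ = x ^ (γ - 2) := by rw [← rpow_sub_one hx0.ne']; ring_nf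

theorem integrableOn_rpow_div_add_mul_add (hγ0 : 0 < γ) (hγ1 : γ < 1) (hu : 0 < u)
    (hv : 0 < v) :
    IntegrableOn (fun x : ℝ => x ^ γ / ((u + x) * (v + x))) (Ioi 0) := by
  refine (integrableOn_rpow_sub_one_div_add hγ0 hγ1 hu).mono'
    (Measurable.aestronglyMeasurable (by fun_prop)) ?_
  filter_upwards [ae_restrict_mem measurableSet_Ioi] with x (hx : 0 < x)
  have hxv : x / (v + x) ≤ 1 := (div_le_one (by positivity)).2 (by linarith)
  calc ‖x ^ γ / ((u + x) * (v + x))‖ = x ^ (γ - 1) / (u + x) * (x / (v + x)) := by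
        rw [norm_of_nonneg (by positivity), rpow_sub_one hx.ne']
        field_simp
    _ ≤ x ^ (γ - 1) / (u + x) := mul_le_of_le_one_right (by positivity) hxv

-- `rpowIntegralConst γ = π / sin (π γ)` for `0 < γ < 1`.
noncomputable def rpowIntegralConst (γ : ℝ) : ℝ :=
  ∫ x in Ioi (0 : ℝ), x ^ (γ - 1) / (1 + x)

theorem integral_rpow_sub_one_div_add (hu : 0 < u) :
    ∫ x in Ioi 0, x ^ (γ - 1) / (u + x) = u ^ (γ - 1) * rpowIntegralConst γ := by
  calc ∫ x in Ioi 0, x ^ (γ - 1) / (u + x)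
      = u * ∫ x in Ioi 0, (u * x) ^ (γ - 1) / (u + u * x) := by
        rw [integral_comp_mul_left_Ioi (fun x => x ^ (γ - 1) / (u + x)) 0 hu, mul_zero,
          smul_eq_mul, mul_inv_cancel_left₀ hu.ne']
    _ = u * ∫ x in Ioi 0, u ^ (γ - 1) / u * (x ^ (γ - 1) / (1 + x)) := by
        congr 1
        refine setIntegral_congr_fun measurableSet_Ioi fun x (hx : 0 < x) => ?_
        rw [mul_rpow hu.le hx.le]
        field_simp
    _ = u ^ (γ - 1) * rpowIntegralConst γ := by
        rw [integral_const_mul, rpowIntegralConst]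
        field_simp

theorem integral_rpow_div_add_mul_add_of_ne (hγ0 : 0 < γ) (hγ1 : γ < 1) (hu : 0 < u)
    (hv : 0 < v) (huv : u ≠ v) :
    ∫ x in Ioi 0, x ^ γ / ((u + x) * (v + x)) = rpowIntegralConst γ * slope (· ^ γ) u v := by
  have hvu : v - u ≠ 0 := sub_ne_zero.2 huv.symm
  have hpf : ∀ x ∈ Ioi (0 : ℝ), x ^ γ / ((u + x) * (v + x))
      = (v * (x ^ (γ - 1) / (v + x)) - u * (x ^ (γ - 1) / (u + x))) / (v - u) := by
    intro x (hx : 0 < x)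
    rw [rpow_sub_one hx.ne']
    field_simp
    ring
  rw [setIntegral_congr_fun measurableSet_Ioi hpf, integral_div,
    integral_sub ((integrableOn_rpow_sub_one_div_add hγ0 hγ1 hv).const_mul v)
      ((integrableOn_rpow_sub_one_div_add hγ0 hγ1 hu).const_mul u),
    integral_const_mul, integral_const_mul, integral_rpow_sub_one_div_add hu,
    integral_rpow_sub_one_div_add hv, slope_def_field, rpow_sub_one hu.ne', rpow_sub_one hv.ne']
  field_simp

theorem continuousAt_integral_rpow_div_add_mul_add (hγ0 : 0 < γ) (hγ1 : γ < 1) (hu : 0 < u)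
    (hv : 0 < v) :
    ContinuousAt (fun w => ∫ x in Ioi 0, x ^ γ / ((u + x) * (w + x))) v := by
  have hv2 : Ioi (v / 2) ∈ 𝓝 v := Ioi_mem_nhds (by linarith)
  refine continuousAt_of_dominated (bound := fun x => x ^ γ / ((u + x) * (v / 2 + x)))
    (Eventually.of_forall fun w => Measurable.aestronglyMeasurable (by fun_prop)) ?_
    (integrableOn_rpow_div_add_mul_add hγ0 hγ1 hu (by linarith)) ?_
  · filter_upwards [hv2] with w (hw : v / 2 < w)
    filter_upwards [ae_restrict_mem measurableSet_Ioi] with x (hx : 0 < x)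
    have hw0 : 0 < w := by linarith
    rw [norm_of_nonneg (by positivity)]
    gcongr
  · filter_upwards [ae_restrict_mem measurableSet_Ioi] with x (hx : 0 < x)
    exact continuousAt_const.div (by fun_prop) (by positivity)

theorem integral_rpow_div_add_mul_add (hγ0 : 0 < γ) (hγ1 : γ < 1) (hu : 0 < u) (hv : 0 < v) :
    ∫ x in Ioi 0, x ^ γ / ((u + x) * (v + x)) = rpowIntegralConst γ * dslope (· ^ γ) u v := by
  rcases ne_or_eq v u with hvu | rfl
  · rw [dslope_of_ne _ hvu, integral_rpow_div_add_mul_add_of_ne hγ0 hγ1 hu hv hvu.symm]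
  -- On the diagonal, both sides are continuous in the second argument and agree off it.
  refine tendsto_nhds_unique (f := fun w => ∫ x in Ioi 0, x ^ γ / ((v + x) * (w + x)))
    (l := 𝓝[≠] v)
    ((continuousAt_integral_rpow_div_add_mul_add hγ0 hγ1 hv hv).tendsto.mono_left
      nhdsWithin_le_nhds) ?_
  refine ((continuousAt_const.mul (continuousAt_dslope_same.2 ?_)).tendsto.mono_left
    nhdsWithin_le_nhds).congr' ?_
  · exact (hasDerivAt_rpow_const (Or.inl hv.ne')).differentiableAt
  filter_upwards [eventually_mem_nhdsWithin, mem_nhdsWithin_of_mem_nhds (Ioi_mem_nhds hv)]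
    with w (hwv : w ≠ v) (hw : 0 < w)
  rw [Pi.mul_apply, dslope_of_ne _ hwv,
    integral_rpow_div_add_mul_add_of_ne hγ0 hγ1 hv hw hwv.symm]

theorem rpowIntegralConst_pos (hγ0 : 0 < γ) (hγ1 : γ < 1) : 0 < rpowIntegralConst γ := by
  have hsupp : Function.support (fun x : ℝ => x ^ (γ - 1) / (1 + x)) ∩ Ioi 0 = Ioi 0 :=
    inter_eq_right.2 fun x (hx : 0 < x) => by simp only [Function.mem_support]; positivity
  rw [rpowIntegralConst, setIntegral_pos_iff_support_of_nonneg_ae ?_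
    (integrableOn_rpow_sub_one_div_add hγ0 hγ1 one_pos), hsupp, volume_Ioi]
  · exact ENNReal.zero_lt_top
  · filter_upwards [ae_restrict_mem measurableSet_Ioi] with x (hx : 0 < x)
    positivity

end RpowKernel

noncomputable def sinhc : ℝ → ℝ := dslope sinh 0

theorem sinhc_of_ne_zero {x : ℝ} (hx : x ≠ 0) : sinhc x = sinh x / x := by
  rw [sinhc, dslope_of_ne _ hx, slope_def_field, sinh_zero, sub_zero, sub_zero]

theorem sinhc_zero : sinhc 0 = 1 := by
  rw [sinhc, dslope_same, Real.deriv_sinh, cosh_zero]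

theorem continuous_sinhc : Continuous sinhc :=
  continuousOn_univ.1 <| (continuousOn_dslope univ_mem).2
    ⟨continuous_sinh.continuousOn, differentiable_sinh 0⟩

theorem sinhc_pos (x : ℝ) : 0 < sinhc x := by
  rcases lt_trichotomy x 0 with hx | rfl | hx
  · rw [sinhc_of_ne_zero hx.ne]
    exact div_pos_of_neg_of_neg (sinh_neg_iff.2 hx) hx
  · rw [sinhc_zero]
    exact one_pos
  · rw [sinhc_of_ne_zero hx.ne']
    exact div_pos (sinh_pos_iff.2 hx) hx

theorem exp_two_mul_sub_exp_two_mul (x y : ℝ) :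
    exp (2 * x) - exp (2 * y) = 2 * exp (x + y) * sinh (x - y) := by
  have h₁ : exp (x + y) * exp (x - y) = exp (2 * x) := by rw [← exp_add]; ring_nf
  have h₂ : exp (x + y) * exp (-(x - y)) = exp (2 * y) := by rw [← exp_add]; ring_nf
  rw [sinh_eq]
  linear_combination h₂ - h₁

theorem Hmean_exp_one (c : ℝ) {t : ℝ} (ht : t ≠ 0) :
    Hmean c (exp t) 1 = (exp t - 1) / (t * sinhc (c * t)) := by
  have he : exp t ≠ 1 := by simpa using ht
  rw [Hmean, if_neg he]
  split_ifs with hc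
  · rw [hc, LM, if_neg he, log_exp, log_one, zero_mul, sinhc_zero, mul_one, sub_zero]
  have hct : c * t ≠ 0 := mul_ne_zero hc ht
  have hsinh : sinh (c * t) ≠ 0 := by simpa using hct
  have hfac : (exp (c * t) + 1) * (exp (c * t) - 1) = 2 * exp (c * t) * sinh (c * t) := by
    have h := exp_two_mul_sub_exp_two_mul (c * t) 0
    rw [mul_zero, exp_zero, add_zero, sub_zero, mul_comm, exp_mul, rpow_two] at h
    linear_combination h
  rw [mul_one, ← exp_mul, one_rpow, mul_comm t c, hfac, sinhc_of_ne_zero hct]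
  field_simp

theorem exp_mul_dslope_rpow_exp {γ : ℝ} (hγ : γ ≠ 0) (a b : ℝ) :
    exp ((1 - γ) * a) * exp ((1 - γ) * b) * dslope (· ^ γ) (exp (2 * a)) (exp (2 * b))
      = γ * (sinhc (γ * (a - b)) / sinhc (a - b)) := by
  rcases eq_or_ne b a with rfl | hba
  · rw [dslope_same, Real.deriv_rpow_const, ← exp_mul, sub_self, mul_zero, sinhc_zero, div_one,
      mul_one, mul_left_comm, ← exp_add, ← exp_add,
      show (1 - γ) * b + (1 - γ) * b + 2 * b * (γ - 1) = 0 by ring, exp_zero, mul_one]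
  have hab : a - b ≠ 0 := sub_ne_zero.2 hba.symm
  have hexp : exp (2 * b) ≠ exp (2 * a) := by simpa using hba
  have hsinh : sinh (b - a) ≠ 0 := by simpa [sub_eq_zero] using hba
  have hprod : exp ((1 - γ) * a) * exp ((1 - γ) * b) * exp (γ * b + γ * a) = exp (b + a) := by
    rw [← exp_add, ← exp_add]
    ring_nf
  rw [dslope_of_ne _ hexp, slope_def_field, ← exp_mul, ← exp_mul,
    show 2 * b * γ = 2 * (γ * b) by ring, show 2 * a * γ = 2 * (γ * a) by ring,
    exp_two_mul_sub_exp_two_mul, exp_two_mul_sub_exp_two_mul,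
    sinhc_of_ne_zero (mul_ne_zero hγ hab), sinhc_of_ne_zero hab,
    show γ * (a - b) = -(γ * b - γ * a) by ring, show a - b = -(b - a) by ring,
    sinh_neg, sinh_neg, ← hprod]
  field_simp

theorem continuous_sinhc_div_sinhc (γ : ℝ) : Continuous fun s => sinhc (γ * s) / sinhc s :=
  (continuous_sinhc.comp (continuous_const.mul continuous_id)).div continuous_sinhc
    fun s => (sinhc_pos s).ne'

theorem isPosDefFun_sinhc_div_sinhc_of_pos {γ : ℝ} (hγ0 : 0 < γ) (hγ1 : γ < 1) :
    IsPosDefFun fun s => sinhc (γ * s) / sinhc s := by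
  refine ⟨continuous_sinhc_div_sinhc γ, fun n t => ?_⟩
  let u i := exp (2 * t i)
  let f i (x : ℝ) := exp ((1 - γ) * t i) * (x ^ (γ / 2) / (u i + x))
  have hf_mul : ∀ i j, ∀ x ∈ Ioi (0 : ℝ), f i x * f j x
      = exp ((1 - γ) * t i) * exp ((1 - γ) * t j) * (x ^ γ / ((u i + x) * (u j + x))) := by
    intro i j x (hx : 0 < x)
    simp only [f]
    rw [show x ^ γ = x ^ (γ / 2) * x ^ (γ / 2) by rw [← rpow_add hx]; ring_nf,
      mul_mul_mul_comm, div_mul_div_comm]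
  have hf_int : ∀ i j, IntegrableOn (fun x => f i x * f j x) (Ioi 0) := fun i j =>
    IntegrableOn.congr_fun
      ((integrableOn_rpow_div_add_mul_add hγ0 hγ1 (exp_pos _) (exp_pos _)).const_mul _)
      (fun x hx => (hf_mul i j x hx).symm) measurableSet_Ioi
  have hf : ∀ i, MemLp (f i) 2 (volume.restrict (Ioi 0)) := fun i =>
    (memLp_two_iff_integrable_sq (Measurable.aestronglyMeasurable (by fun_prop))).2 <| by
      simp only [sq]
      exact hf_int i i
  have hentry : ∀ i j, sinhc (γ * (t i - t j)) / sinhc (t i - t j)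
      = (γ * rpowIntegralConst γ)⁻¹ * ∫ x in Ioi 0, f i x * f j x := by
    intro i j
    rw [setIntegral_congr_fun measurableSet_Ioi (hf_mul i j), integral_const_mul,
      integral_rpow_div_add_mul_add hγ0 hγ1 (exp_pos _) (exp_pos _),
      mul_left_comm _ (rpowIntegralConst γ), exp_mul_dslope_rpow_exp hγ0.ne']
    field_simp [(rpowIntegralConst_pos hγ0 hγ1).ne']
  have hC : (0 : ℂ) ≤ ((γ * rpowIntegralConst γ)⁻¹ : ℝ) :=
    Complex.zero_le_real.2 (inv_nonneg.2 (mul_pos hγ0 (rpowIntegralConst_pos hγ0 hγ1)).le)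
  convert (posSemidef_of_integral_mul hf).smul hC using 1
  ext i j
  simp [hentry]

theorem isPosDefFun_sinhc_div_sinhc {γ : ℝ} (hγ0 : 0 ≤ γ) (hγ1 : γ < 1) :
    IsPosDefFun fun s => sinhc (γ * s) / sinhc s := by
  rcases hγ0.eq_or_lt with rfl | hγ0
  · refine IsPosDefFun.of_tendsto (l := 𝓝[>] 0)
      (φ := fun γ s => sinhc (γ * s) / sinhc s) (continuous_sinhc_div_sinhc 0) ?_ fun s => ?_
    · filter_upwards [Ioo_mem_nhdsGT one_pos] with γ hγ
      exact isPosDefFun_sinhc_div_sinhc_of_pos hγ.1 hγ.2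
    · exact (((continuous_sinhc.comp (continuous_id.mul continuous_const)).tendsto 0).mono_left
        nhdsWithin_le_nhds).div_const _
  · exact isPosDefFun_sinhc_div_sinhc_of_pos hγ0 hγ1

theorem statement0_general (α β : ℝ) (hα : 0 ≤ α) (hαβ : α < β)
    (φ : ℝ → ℝ) (hφ0 : φ 0 = 1)
    (hφ : ∀ t : ℝ, t ≠ 0 →
      φ t = Hmean β (Real.exp t) 1 / Hmean α (Real.exp t) 1) :
    IsPosDefFun φ := by
  have hβ : 0 < β := hα.trans_lt hαβ
  have hφ_eq : φ = fun t => sinhc (α / β * (β * t)) / sinhc (β * t) := by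
    funext t
    rcases eq_or_ne t 0 with rfl | ht
    · simp [hφ0, sinhc_zero]
    have he : exp t - 1 ≠ 0 := sub_ne_zero.2 (by simpa using ht)
    rw [hφ t ht, Hmean_exp_one β ht, Hmean_exp_one α ht,
      show α / β * (β * t) = α * t by field_simp]
    field_simp [(sinhc_pos (α * t)).ne', (sinhc_pos (β * t)).ne']
  rw [hφ_eq]
  exact (isPosDefFun_sinhc_div_sinhc (div_nonneg hα hβ.le) ((div_lt_one hβ).2 hαβ)).comp_mul β

/-- If `0 ≤ α < β ≤ 1`, the function `t ↦ H_β(eᵗ,1)/H_α(eᵗ,1)` (with value `1` at `t = 0`)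
is positive definite. -/
theorem statement0 (α β : ℝ) (hα : 0 ≤ α) (hαβ : α < β) (hβ : β ≤ 1)
    (φ : ℝ → ℝ) (hφ0 : φ 0 = 1)
    (hφ : ∀ t : ℝ, t ≠ 0 →
      φ t = Hmean β (Real.exp t) 1 / Hmean α (Real.exp t) 1) :
    IsPosDefFun φ :=
  statement0_general α β hα hαβ φ hφ0 hφ
end

section
/- For every α ∈ ℝ with |α| ≤ 1 and all x, y > 0: H_α(x,y) ≤ G_α(x,y) ≤ LM(x,y) ≤ A_α(x,y). -/
/-! With `u = x ^ α` and `v = y ^ α`, each of `H_α`, `G_α`, `LM` and `A_α` at `(x, y)` is the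
same positive multiple `α (x - y) / (u - v)` of the harmonic, geometric, logarithmic and
arithmetic mean of `u` and `v`. So the theorem is the classical chain `HM ≤ GM ≤ LM ≤ AM`,
which in the coordinates `√(uv) · e^{±d}`, `d = (log u - log v) / 2`, reads
`1 ≤ sinh d / d ≤ cosh d`. -/

open scoped ComplexOrder

open Real

lemma one_le_sinh_div_self {d : ℝ} (hd : d ≠ 0) : 1 ≤ sinh d / d := by
  rcases hd.lt_or_gt with hneg | hpos
  · rw [le_div_iff_of_neg hneg, one_mul]
    exact sinh_le_self_iff.2 hneg.le
  · rw [le_div_iff₀ hpos, one_mul]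
    exact self_le_sinh_iff.2 hpos.le

lemma monotone_mul_cosh_sub_sinh : Monotone fun d : ℝ => d * cosh d - sinh d := by
  have hderiv (d : ℝ) : HasDerivAt (fun d : ℝ => d * cosh d - sinh d) (d * sinh d) d :=
    (((hasDerivAt_id' d).fun_mul (hasDerivAt_cosh d)).fun_sub (hasDerivAt_sinh d)).congr_deriv
      (by ring)
  refine monotone_of_deriv_nonneg (fun d => (hderiv d).differentiableAt) fun d => ?_
  rw [(hderiv d).deriv]
  rcases le_total 0 d with h | h
  · exact mul_nonneg h (sinh_nonneg_iff.2 h)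
  · exact mul_nonneg_of_nonpos_of_nonpos h (sinh_nonpos_iff.2 h)

lemma sinh_div_self_le_cosh {d : ℝ} (hd : d ≠ 0) : sinh d / d ≤ cosh d := by
  rcases hd.lt_or_gt with hneg | hpos
  · have := monotone_mul_cosh_sub_sinh hneg.le
    simp only [zero_mul, sinh_zero, sub_zero] at this
    rw [div_le_iff_of_neg hneg]
    linarith
  · have := monotone_mul_cosh_sub_sinh hpos.le
    simp only [zero_mul, sinh_zero, sub_zero] at this
    rw [div_le_iff₀ hpos]
    linarith

section LogarithmicMean

variable {x y : ℝ}

lemma LM_self (x : ℝ) : LM x x = x := if_pos rfl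

lemma LM_of_ne (h : x ≠ y) : LM x y = (x - y) / (log x - log y) := if_neg h

lemma sqrt_mul_mul_exp_half_log_sub (hx : 0 < x) (hy : 0 < y) :
    √(x * y) * exp ((log x - log y) / 2) = x := by
  rw [← exp_log (mul_pos hx hy), ← exp_half, ← exp_add, log_mul hx.ne' hy.ne',
    show (log x + log y) / 2 + (log x - log y) / 2 = log x by ring, exp_log hx]

lemma sqrt_mul_mul_exp_neg_half_log_sub (hx : 0 < x) (hy : 0 < y) :
    √(x * y) * exp (-((log x - log y) / 2)) = y := by
  rw [mul_comm x, show -((log x - log y) / 2) = (log y - log x) / 2 by ring]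
  exact sqrt_mul_mul_exp_half_log_sub hy hx

lemma sqrt_mul_mul_sinh_half_log_sub (hx : 0 < x) (hy : 0 < y) :
    √(x * y) * sinh ((log x - log y) / 2) = (x - y) / 2 := by
  rw [sinh_eq, mul_div_assoc', mul_sub, sqrt_mul_mul_exp_half_log_sub hx hy,
    sqrt_mul_mul_exp_neg_half_log_sub hx hy]

lemma sqrt_mul_mul_cosh_half_log_sub (hx : 0 < x) (hy : 0 < y) :
    √(x * y) * cosh ((log x - log y) / 2) = (x + y) / 2 := by
  rw [cosh_eq, mul_div_assoc', mul_add, sqrt_mul_mul_exp_half_log_sub hx hy,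
    sqrt_mul_mul_exp_neg_half_log_sub hx hy]

lemma half_log_sub_ne_zero (hx : 0 < x) (hy : 0 < y) (hxy : x ≠ y) :
    (log x - log y) / 2 ≠ 0 :=
  div_ne_zero (sub_ne_zero.2 (log_injOn_pos.ne hx hy hxy)) two_ne_zero

lemma LM_eq_sqrt_mul_mul_sinh_div (hx : 0 < x) (hy : 0 < y) (hxy : x ≠ y) :
    LM x y = √(x * y) * (sinh ((log x - log y) / 2) / ((log x - log y) / 2)) := by
  have hd := half_log_sub_ne_zero hx hy hxy
  rw [LM_of_ne hxy, ← mul_div_assoc, sqrt_mul_mul_sinh_half_log_sub hx hy]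
  field_simp

lemma sqrt_mul_le_LM (hx : 0 < x) (hy : 0 < y) : √(x * y) ≤ LM x y := by
  rcases eq_or_ne x y with rfl | hxy
  · rw [LM_self, sqrt_mul_self hx.le]
  rw [LM_eq_sqrt_mul_mul_sinh_div hx hy hxy]
  exact le_mul_of_one_le_right (sqrt_nonneg _)
    (one_le_sinh_div_self (half_log_sub_ne_zero hx hy hxy))

lemma LM_le_add_div_two (hx : 0 < x) (hy : 0 < y) : LM x y ≤ (x + y) / 2 := by
  rcases eq_or_ne x y with rfl | hxy
  · rw [LM_self]; linarith
  rw [LM_eq_sqrt_mul_mul_sinh_div hx hy hxy, ← sqrt_mul_mul_cosh_half_log_sub hx hy]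
  exact mul_le_mul_of_nonneg_left
    (sinh_div_self_le_cosh (half_log_sub_ne_zero hx hy hxy)) (sqrt_nonneg _)

lemma LM_pos (hx : 0 < x) (hy : 0 < y) : 0 < LM x y :=
  (sqrt_pos.2 (mul_pos hx hy)).trans_le (sqrt_mul_le_LM hx hy)

lemma two_mul_mul_div_add_le_sqrt_mul (hx : 0 < x) (hy : 0 < y) :
    2 * (x * y) / (x + y) ≤ √(x * y) := by
  have hxs := sq_sqrt hx.le
  have hys := sq_sqrt hy.le
  rw [div_le_iff₀ (by positivity), sqrt_mul hx.le]
  nlinarith [sq_nonneg (√x - √y), mul_pos (sqrt_pos.2 hx) (sqrt_pos.2 hy)]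

end LogarithmicMean

section PowerMeans

variable {α x y : ℝ}

lemma LM_eq_mul_LM_rpow (hx : 0 < x) (hy : 0 < y) (hα : α ≠ 0) (hxy : x ≠ y) :
    LM x y = α * (x - y) / (x ^ α - y ^ α) * LM (x ^ α) (y ^ α) := by
  have hpow : x ^ α ≠ y ^ α := mt (rpow_left_inj hx.le hy.le hα).1 hxy
  have hlog : log x - log y ≠ 0 := sub_ne_zero.2 (log_injOn_pos.ne hx hy hxy)
  rw [LM_of_ne hxy, LM_of_ne hpow, log_rpow hx, log_rpow hy, ← mul_sub]
  field_simp [sub_ne_zero.2 hpow]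

lemma Hmean_eq_mul (hx : 0 < x) (hy : 0 < y) (hα : α ≠ 0) (hxy : x ≠ y) :
    Hmean α x y = α * (x - y) / (x ^ α - y ^ α)
      * (2 * (x ^ α * y ^ α) / (x ^ α + y ^ α)) := by
  rw [Hmean, if_neg hxy, if_neg hα, mul_rpow hx.le hy.le]
  field_simp

lemma Gmean_eq_mul (hx : 0 < x) (hy : 0 < y) (hα : α ≠ 0) (hxy : x ≠ y) :
    Gmean α x y = α * (x - y) / (x ^ α - y ^ α) * √(x ^ α * y ^ α) := by
  rw [Gmean, if_neg hxy, if_neg hα, sqrt_eq_rpow, ← mul_rpow hx.le hy.le,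
    ← rpow_mul (mul_pos hx hy).le, mul_one_div]
  field_simp

lemma Amean_eq_mul (hα : α ≠ 0) (hxy : x ≠ y) :
    Amean α x y = α * (x - y) / (x ^ α - y ^ α) * ((x ^ α + y ^ α) / 2) := by
  rw [Amean, if_neg hxy, if_neg hα]
  field_simp

end PowerMeans

theorem statement5_general (α : ℝ) (x y : ℝ) (hx : 0 < x) (hy : 0 < y) :
    Hmean α x y ≤ Gmean α x y ∧ Gmean α x y ≤ LM x y ∧ LM x y ≤ Amean α x y := by
  rcases eq_or_ne x y with rfl | hxy
  · simp [Hmean, Gmean, Amean, LM]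
  rcases eq_or_ne α 0 with rfl | hα
  · simp [Hmean, Gmean, Amean, hxy]
  have hu : 0 < x ^ α := rpow_pos_of_pos hx α
  have hv : 0 < y ^ α := rpow_pos_of_pos hy α
  have hLM := LM_eq_mul_LM_rpow hx hy hα hxy
  have hscale : 0 < α * (x - y) / (x ^ α - y ^ α) :=
    pos_of_mul_pos_left (hLM ▸ LM_pos hx hy) (LM_pos hu hv).le
  rw [Hmean_eq_mul hx hy hα hxy, Gmean_eq_mul hx hy hα hxy, Amean_eq_mul hα hxy, hLM]
  exact ⟨mul_le_mul_of_nonneg_left (two_mul_mul_div_add_le_sqrt_mul hu hv) hscale.le,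
    mul_le_mul_of_nonneg_left (sqrt_mul_le_LM hu hv) hscale.le,
    mul_le_mul_of_nonneg_left (LM_le_add_div_two hu hv) hscale.le⟩

/-- For `|α| ≤ 1` and `x, y > 0`: `H_α ≤ G_α ≤ LM ≤ A_α`. -/
theorem statement5 (α : ℝ) (hα : |α| ≤ 1) (x y : ℝ) (hx : 0 < x) (hy : 0 < y) :
    Hmean α x y ≤ Gmean α x y ∧ Gmean α x y ≤ LM x y ∧ LM x y ≤ Amean α x y :=
  statement5_general α x y hx hy
end

section
/- Let 0 < α ≤ 1 and 0 < β < 1 with β + α/2 ≤ 1. Then the function φ : ℝ → ℝ defined by φ(t) = M_β(e^{2t}, 1) / G_α(e^{2t}, 1) for t ≠ 0 and φ(0) = 1 is positive definite. In particular this holds for α = 1/m and β = m/(m+1) for every natural number m ≥ 1. -/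
/-!
For `t ≠ 0` the function equals `(1-β)/(αβ) · (sinh(βt)/sinh((1-β)t)) · (sinh(αt)/sinh t)`.
By Euler's product for `sinh`, `sinh(at)/sinh(bt)` with `0 ≤ a ≤ b` is `a/b` times a pointwise
limit of products of the functions `(1 + a²s²)/(1 + b²s²) = a²/b² + (1 - a²/b²)/(1 + b²s²)`,
and `1/(1 + s²) = ∫₀^∞ e^{-u} cos(su) du` is positive definite. Sums, products (Schur),
integrals and pointwise limits of positive definite functions are positive definite.
If `β ≤ 1/2` both quotients have `a ≤ b`; otherwise the function is regrouped as
`(1 + sinh((2β-1)t)/sinh t) · sinh(αt)/sinh((2-2β)t)`, and `α ≤ 2 - 2β` is `β + α/2 ≤ 1`.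
-/

open scoped ComplexOrder

open Finset Filter Matrix MeasureTheory Real Set Topology

theorem Matrix.PosSemidef.map_ofReal {n : Type*} [Fintype n] {M : Matrix n n ℝ}
    (hM : M.PosSemidef) : (M.map ((↑) : ℝ → ℂ)).PosSemidef := by
  obtain ⟨m, v, rfl⟩ := posSemidef_iff_eq_sum_vecMulVec.mp hM
  have hmap : (∑ k, vecMulVec (v k) (star (v k))).map ((↑) : ℝ → ℂ)
      = ∑ k, vecMulVec (fun i => (v k i : ℂ)) (star fun i => (v k i : ℂ)) := by
    ext i j
    simp [Matrix.sum_apply, vecMulVec_apply]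
  rw [hmap]
  exact posSemidef_sum _ fun k _ => posSemidef_vecMulVec_self_star _

def PosSemidefFun {G : Type*} [AddGroup G] (f : G → ℝ) : Prop :=
  ∀ (n : ℕ) (t : Fin n → G), (Matrix.of fun i j => f (t i - t j)).PosSemidef

section

variable {G : Type*} [AddGroup G] {f g : G → ℝ}

theorem dotProduct_mulVec_of_sub {n : ℕ} (f : G → ℝ) (t : Fin n → G) (x : Fin n → ℝ) :
    x ⬝ᵥ (Matrix.of fun i j => f (t i - t j)) *ᵥ x = ∑ i, ∑ j, x i * x j * f (t i - t j) := by
  simp only [dotProduct, mulVec, of_apply, Finset.mul_sum]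
  exact Finset.sum_congr rfl fun i _ => Finset.sum_congr rfl fun j _ => by ring

theorem PosSemidefFun.apply_neg (hf : PosSemidefFun f) (s : G) : f (-s) = f s := by
  simpa using (hf 2 ![s, 0]).isHermitian.apply 0 1

theorem posSemidefFun_iff : PosSemidefFun f ↔ (∀ s, f (-s) = f s) ∧
    ∀ (n : ℕ) (t : Fin n → G) (x : Fin n → ℝ), 0 ≤ ∑ i, ∑ j, x i * x j * f (t i - t j) := by
  refine ⟨fun hf => ⟨hf.apply_neg, fun n t x => ?_⟩, fun ⟨hev, hx⟩ n t => ?_⟩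
  · simpa [dotProduct_mulVec_of_sub] using (hf n t).dotProduct_mulVec_nonneg x
  · refine PosSemidef.of_dotProduct_mulVec_nonneg ?_ fun x => ?_
    · refine IsHermitian.ext fun i j => ?_
      simp only [of_apply, star_trivial, ← neg_sub (t i), hev]
    · simpa [dotProduct_mulVec_of_sub] using hx n t x

namespace PosSemidefFun

theorem const {c : ℝ} (hc : 0 ≤ c) : PosSemidefFun fun _ : G => c := fun n _ => by
  convert (posSemidef_vecMulVec_self_star (fun _ : Fin n => (1 : ℝ))).smul hc using 1
  ext i j
  simp [vecMulVec_apply]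

theorem add (hf : PosSemidefFun f) (hg : PosSemidefFun g) : PosSemidefFun fun s => f s + g s :=
  fun n t => (hf n t).add (hg n t)

theorem const_mul (hf : PosSemidefFun f) {c : ℝ} (hc : 0 ≤ c) : PosSemidefFun fun s => c * f s :=
  fun n t => (hf n t).smul hc

theorem mul (hf : PosSemidefFun f) (hg : PosSemidefFun g) : PosSemidefFun fun s => f s * g s :=
  fun n t => (hf n t).hadamard (hg n t)

theorem prod {ι : Type*} (s : Finset ι) {F : ι → G → ℝ} (hF : ∀ i ∈ s, PosSemidefFun (F i)) :
    PosSemidefFun fun x => ∏ i ∈ s, F i x := by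
  classical
  induction s using Finset.induction_on with
  | empty => simpa using const zero_le_one
  | insert i s hi ih =>
    simp only [Finset.prod_insert hi]
    exact (hF i (mem_insert_self i s)).mul (ih fun j hj => hF j (mem_insert_of_mem hj))

theorem comp_addMonoidHom {H : Type*} [AddGroup H] (hf : PosSemidefFun f) (φ : H →+ G) :
    PosSemidefFun (f ∘ φ) :=
  fun n t => by simpa [map_sub] using hf n (φ ∘ t)

theorem of_tendsto {ι : Type*} {l : Filter ι} [l.NeBot] {F : ι → G → ℝ}
    (hF : ∀ i, PosSemidefFun (F i)) (hlim : ∀ s, Tendsto (fun i => F i s) l (𝓝 (f s))) :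
    PosSemidefFun f := by
  refine posSemidefFun_iff.mpr ⟨fun s => ?_, fun n t x => ?_⟩
  · exact tendsto_nhds_unique (by simpa [(hF _).apply_neg] using hlim (-s)) (hlim s)
  · refine ge_of_tendsto (tendsto_finsetSum _ fun i _ => tendsto_finsetSum _ fun j _ =>
      (hlim _).const_mul _) (Eventually.of_forall fun k => ?_)
    exact (posSemidefFun_iff.mp (hF k)).2 n t x

theorem integral {α : Type*} [MeasurableSpace α] (μ : Measure α) {F : α → G → ℝ}
    (hF : ∀ u, PosSemidefFun (F u)) (hint : ∀ s, Integrable (fun u => F u s) μ) :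
    PosSemidefFun fun s => ∫ u, F u s ∂μ := by
  refine posSemidefFun_iff.mpr ⟨fun s => ?_, fun n t x => ?_⟩
  · simp only [(hF _).apply_neg]
  · have hswap : ∑ i, ∑ j, x i * x j * ∫ u, F u (t i - t j) ∂μ
        = ∫ u, ∑ i, ∑ j, x i * x j * F u (t i - t j) ∂μ := by
      rw [integral_finsetSum _ fun i _ => integrable_finsetSum _ fun j _ => (hint _).const_mul _]
      refine sum_congr rfl fun i _ => ?_
      rw [integral_finsetSum _ fun j _ => (hint _).const_mul _]
      exact sum_congr rfl fun j _ => (integral_const_mul _ _).symm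
    rw [hswap]
    exact integral_nonneg fun u => (posSemidefFun_iff.mp (hF u)).2 n t x

end PosSemidefFun

end

theorem posSemidefFun_cos_mul (a : ℝ) : PosSemidefFun fun s : ℝ => Real.cos (a * s) := fun n t => by
  have hC := posSemidef_vecMulVec_self_star fun i => Real.cos (a * t i)
  have hS := posSemidef_vecMulVec_self_star fun i => Real.sin (a * t i)
  convert hC.add hS using 1
  ext i j
  simp [vecMulVec_apply, mul_sub, Real.cos_sub]

open Complex in
theorem re_exp_neg_one_add_mul_I_mul (s u : ℝ) :
    RCLike.re (exp ((-1 + s * I) * u)) = Real.exp (-u) * Real.cos (s * u) := by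
  simp [exp_re]

theorem integrableOn_exp_neg_mul_cos (s : ℝ) :
    IntegrableOn (fun u => Real.exp (-u) * Real.cos (s * u)) (Ioi 0) := by
  have h := (integrableOn_exp_mul_complex_Ioi (a := -1 + s * Complex.I) (by simp) 0).re
  simp only [re_exp_neg_one_add_mul_I_mul] at h
  exact h

theorem integral_exp_neg_mul_cos (s : ℝ) :
    ∫ u in Ioi 0, Real.exp (-u) * Real.cos (s * u) = (1 + s ^ 2)⁻¹ := by
  simp_rw [← re_exp_neg_one_add_mul_I_mul]
  rw [integral_re (integrableOn_exp_mul_complex_Ioi (by simp) 0),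
    integral_exp_mul_complex_Ioi (by simp) 0]
  simp [Complex.div_re, Complex.normSq, sq]

theorem posSemidefFun_inv_one_add_sq : PosSemidefFun fun s : ℝ => (1 + s ^ 2)⁻¹ := by
  simp_rw [← integral_exp_neg_mul_cos]
  refine PosSemidefFun.integral _ (fun u => ?_) integrableOn_exp_neg_mul_cos
  simpa only [mul_comm _ u] using (posSemidefFun_cos_mul u).const_mul (Real.exp_pos (-u)).le

theorem posSemidefFun_one_add_sq_div_one_add_sq {a b : ℝ} (hab : a ^ 2 ≤ b ^ 2) (hb : b ≠ 0) :
    PosSemidefFun fun s : ℝ => (1 + (a * s) ^ 2) / (1 + (b * s) ^ 2) := by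
  have hb2 : 0 < b ^ 2 := by positivity
  have hsplit : (fun s : ℝ => (1 + (a * s) ^ 2) / (1 + (b * s) ^ 2))
      = fun s => a ^ 2 / b ^ 2 + (1 - a ^ 2 / b ^ 2) * (1 + (b * s) ^ 2)⁻¹ := by
    funext s
    field_simp
    ring
  rw [hsplit]
  exact (PosSemidefFun.const (by positivity)).add
    ((posSemidefFun_inv_one_add_sq.comp_addMonoidHom (AddMonoidHom.mulLeft b)).const_mul
      (sub_nonneg.mpr ((div_le_one hb2).mpr hab)))

theorem Real.tendsto_euler_sinh_prod (x : ℝ) :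
    Tendsto (fun n : ℕ => x * ∏ j ∈ range n, (1 + (x / ((j + 1) * π)) ^ 2)) atTop
      (𝓝 (sinh x)) := by
  have h := (Complex.continuous_im.tendsto _).comp
    (Complex.tendsto_euler_sin_prod (x / π * Complex.I))
  have hxI : (π : ℂ) * (x / π * Complex.I) = x * Complex.I := by field_simp
  convert h using 1
  · funext n
    have hfac : ∀ j : ℕ, (1 - ((x : ℂ) / π * Complex.I) ^ 2 / ((j : ℂ) + 1) ^ 2)
        = ((1 + (x / ((j + 1) * π)) ^ 2 : ℝ) : ℂ) := by
      intro j
      push_cast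
      field_simp
      rw [Complex.I_sq]
      ring
    simp only [Function.comp_apply, hfac, ← Complex.ofReal_prod, hxI]
    rw [mul_right_comm, Complex.mul_I_im, ← Complex.ofReal_mul, Complex.ofReal_re]
  · simp [hxI, Complex.sin_mul_I, ← Complex.ofReal_sinh]

theorem tendsto_prod_dslope_sinh (x : ℝ) :
    Tendsto (fun n : ℕ => ∏ j ∈ range n, (1 + (x / ((j + 1) * π)) ^ 2)) atTop
      (𝓝 (dslope sinh 0 x)) := by
  rcases eq_or_ne x 0 with rfl | hx
  · simp [dslope_same, Real.deriv_sinh]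
  · rw [dslope_of_ne _ hx, slope_def_field, sinh_zero, sub_zero, sub_zero]
    exact ((tendsto_euler_sinh_prod x).div_const x).congr fun n => mul_div_cancel_left₀ _ hx

theorem dslope_sinh_pos (x : ℝ) : 0 < dslope sinh 0 x := by
  rcases lt_trichotomy x 0 with hx | rfl | hx
  · rw [dslope_of_ne _ hx.ne, slope_def_field, sinh_zero, sub_zero, sub_zero]
    exact div_pos_of_neg_of_neg (sinh_neg_iff.mpr hx) hx
  · simp [dslope_same, Real.deriv_sinh]
  · rw [dslope_of_ne _ hx.ne', slope_def_field, sinh_zero, sub_zero, sub_zero]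
    exact div_pos (sinh_pos_iff.mpr hx) hx

theorem continuous_dslope_sinh : Continuous (dslope sinh 0) :=
  continuousOn_univ.mp <| (continuousOn_dslope univ_mem).mpr
    ⟨continuous_sinh.continuousOn, differentiable_sinh 0⟩

/-- `sinh (a t) / sinh (b t)`, written through `dslope sinh 0 x = sinh x / x` so that it is
continuous at `t = 0`, where it takes the value `a / b`. -/
noncomputable def sinhRatio (a b t : ℝ) : ℝ :=
  a * dslope sinh 0 (a * t) / (b * dslope sinh 0 (b * t))

theorem sinhRatio_zero (a b : ℝ) : sinhRatio a b 0 = a / b := by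
  simp [sinhRatio, dslope_same, Real.deriv_sinh]

theorem mul_dslope_sinh_mul (a : ℝ) {t : ℝ} (ht : t ≠ 0) :
    a * dslope sinh 0 (a * t) = sinh (a * t) / t := by
  rcases eq_or_ne a 0 with rfl | ha
  · simp
  · rw [dslope_of_ne _ (mul_ne_zero ha ht), slope_def_field, sinh_zero, sub_zero, sub_zero]
    field_simp

theorem sinhRatio_of_ne_zero (a b : ℝ) {t : ℝ} (ht : t ≠ 0) :
    sinhRatio a b t = sinh (a * t) / sinh (b * t) := by
  rw [sinhRatio, mul_dslope_sinh_mul a ht, mul_dslope_sinh_mul b ht,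
    div_div_div_cancel_right₀ ht]

theorem continuous_sinhRatio (a : ℝ) {b : ℝ} (hb : b ≠ 0) : Continuous (sinhRatio a b) := by
  unfold sinhRatio
  exact ((continuous_dslope_sinh.comp (continuous_const_mul a)).const_mul a).div
    ((continuous_dslope_sinh.comp (continuous_const_mul b)).const_mul b)
    fun t => mul_ne_zero hb (dslope_sinh_pos _).ne'

theorem tendsto_prod_sinhRatio (a b t : ℝ) :
    Tendsto (fun n : ℕ => a / b *
        ∏ j ∈ range n, (1 + (a * t / ((j + 1) * π)) ^ 2) / (1 + (b * t / ((j + 1) * π)) ^ 2))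
      atTop (𝓝 (sinhRatio a b t)) := by
  have h := ((tendsto_prod_dslope_sinh (a * t)).div (tendsto_prod_dslope_sinh (b * t))
    (dslope_sinh_pos _).ne').const_mul (a / b)
  rw [← mul_div_mul_comm] at h
  simpa only [prod_div_distrib, Pi.div_apply, sinhRatio] using h

theorem posSemidefFun_sinhRatio {a b : ℝ} (ha : 0 ≤ a) (hab : a ≤ b) (hb : 0 < b) :
    PosSemidefFun (sinhRatio a b) := by
  refine PosSemidefFun.of_tendsto (fun n => PosSemidefFun.const_mul
    (PosSemidefFun.prod (range n) fun j _ => ?_) (div_nonneg ha hb.le))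
    (tendsto_prod_sinhRatio a b)
  simpa only [div_mul_eq_mul_div] using
    posSemidefFun_one_add_sq_div_one_add_sq (a := a / ((j + 1) * π)) (b := b / ((j + 1) * π))
      (by gcongr) (by positivity)

theorem exp_two_mul_rpow_sub_one (t γ : ℝ) :
    exp (2 * t) ^ γ - 1 = 2 * exp (γ * t) * sinh (γ * t) := by
  rw [← exp_mul, sinh_eq]
  field_simp
  rw [mul_sub, ← exp_add, ← exp_add, add_neg_cancel, exp_zero]
  ring_nf

theorem Mmean_exp_two_mul_one {β t : ℝ} (hβ : β ≠ 1) (ht : t ≠ 0) :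
    Mmean β (exp (2 * t)) 1 = (1 - β) / β * exp t * sinh (β * t) / sinh ((1 - β) * t) := by
  have hx : exp (2 * t) ≠ 1 := by simpa using ht
  rw [Mmean, if_neg hx, one_rpow, one_rpow, exp_two_mul_rpow_sub_one, exp_two_mul_rpow_sub_one,
    show (β - 1) * t = -((1 - β) * t) by ring, sinh_neg,
    show -((1 - β) * t) = β * t - t by ring, exp_sub]
  field_simp
  ring

theorem Gmean_exp_two_mul_one {α t : ℝ} (hα : α ≠ 0) (ht : t ≠ 0) :
    Gmean α (exp (2 * t)) 1 = α * exp t * sinh t / sinh (α * t) := by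
  have hx : exp (2 * t) ≠ 1 := by simpa using ht
  have hsub_one := exp_two_mul_rpow_sub_one t 1
  rw [rpow_one, one_mul] at hsub_one
  rw [Gmean, if_neg hx, if_neg hα, one_rpow, mul_one, ← exp_mul, hsub_one, exp_two_mul_rpow_sub_one,
    show 2 * t * (α / 2) = α * t by ring]
  field_simp

theorem sinhRatio_mul_sinhRatio_one {α β : ℝ} (hβ : β ≠ 1) (t : ℝ) :
    sinhRatio β (1 - β) t * sinhRatio α 1 t
      = (1 + sinhRatio (2 * β - 1) 1 t) * sinhRatio α (2 - 2 * β) t := by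
  have hβ' : 1 - β ≠ 0 := sub_ne_zero.mpr hβ.symm
  rcases eq_or_ne t 0 with rfl | ht
  · simp only [sinhRatio_zero]
    field_simp
    ring
  have hs1 : sinh t ≠ 0 := sinh_ne_zero.mpr ht
  have hsum : sinh t + sinh ((2 * β - 1) * t) = 2 * sinh (β * t) * cosh ((1 - β) * t) := by
    rw [show (2 * β - 1) * t = β * t - (1 - β) * t by ring, sinh_sub]
    nth_rw 1 [show t = β * t + (1 - β) * t by ring]
    rw [sinh_add]
    ring
  simp only [sinhRatio_of_ne_zero _ _ ht, one_mul]
  rw [one_add_div hs1, hsum, show (2 - 2 * β) * t = 2 * ((1 - β) * t) by ring,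
    sinh_two_mul]
  field_simp

theorem Mmean_div_Gmean_exp_two_mul {α β t : ℝ} (hα : α ≠ 0) (hβ : β ≠ 1) (ht : t ≠ 0) :
    Mmean β (exp (2 * t)) 1 / Gmean α (exp (2 * t)) 1
      = (1 - β) / (α * β) * (sinhRatio β (1 - β) t * sinhRatio α 1 t) := by
  rw [Mmean_exp_two_mul_one hβ ht, Gmean_exp_two_mul_one hα ht, sinhRatio_of_ne_zero _ _ ht,
    sinhRatio_of_ne_zero _ _ ht, one_mul]
  field_simp

/-- For `0 < α ≤ 1` and `0 < β < 1` with `β + α/2 ≤ 1`, the function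
`t ↦ M_β(e^{2t},1)/G_α(e^{2t},1)` (with value `1` at `t = 0`) is positive definite.
(In particular for `α = 1/m`, `β = m/(m+1)`, `m ≥ 1`.) -/
theorem statement6 (α β : ℝ) (hα0 : 0 < α) (hα1 : α ≤ 1) (hβ0 : 0 < β) (hβ1 : β < 1)
    (hβα : β + α / 2 ≤ 1)
    (φ : ℝ → ℝ) (hφ0 : φ 0 = 1)
    (hφ : ∀ t : ℝ, t ≠ 0 →
      φ t = Mmean β (Real.exp (2 * t)) 1 / Gmean α (Real.exp (2 * t)) 1) :
    IsPosDefFun φ := by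
  have h1β : 0 < 1 - β := by linarith
  have hφ_eq : φ = fun t => (1 - β) / (α * β) * (sinhRatio β (1 - β) t * sinhRatio α 1 t) := by
    funext t
    rcases eq_or_ne t 0 with rfl | ht
    · rw [hφ0, sinhRatio_zero, sinhRatio_zero]
      field_simp
    · rw [hφ t ht, Mmean_div_Gmean_exp_two_mul hα0.ne' hβ1.ne ht]
  have hcont : Continuous φ := hφ_eq ▸ continuous_const.mul
    ((continuous_sinhRatio _ h1β.ne').mul (continuous_sinhRatio _ one_ne_zero))
  have hpd : PosSemidefFun φ := by
    rw [hφ_eq]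
    refine PosSemidefFun.const_mul ?_ (by positivity)
    rcases le_or_gt β (1 / 2) with hβ | hβ
    · exact (posSemidefFun_sinhRatio hβ0.le (by linarith) h1β).mul
        (posSemidefFun_sinhRatio hα0.le hα1 one_pos)
    · simp only [sinhRatio_mul_sinhRatio_one hβ1.ne]
      exact ((PosSemidefFun.const zero_le_one).add
        (posSemidefFun_sinhRatio (by linarith) (by linarith) one_pos)).mul
        (posSemidefFun_sinhRatio hα0.le (by linarith) (by linarith))
  exact ⟨hcont, fun n t => (hpd n t).map_ofReal⟩
end

section
/- For every natural number m ≥ 1 and all x, y > 0: M_{m/(m+1)}(x,y) ≤ G_{1/m}(x,y) ≤ LM(x,y) ≤ A_{1/m}(x,y) ≤ M_{(m+1)/m}(x,y). -/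
open scoped ComplexOrder

/-!
Put `x = g e^h`, `y = g e^(-h)` with `g = √(xy)`. Every mean in the chain becomes `g` times a
hyperbolic expression in `h`: `LM = g sinh h / h`, `G_α = g α sinh h / sinh (α h)`,
`A_α = g α sinh h cosh (α h) / sinh (α h)` and
`M_α = g (α - 1)/α · sinh (α h) / sinh ((α - 1) h)`. With `h = m t` the four inequalities reduce
to: `sinh (m s) / sinh s = ∑ₖ cosh ((m - 1 - 2k) s)` is increasing in `s > 0` (compare
`s = m t/(m + 1)` with `t`), `t ≤ sinh t`, `tanh t ≤ t`, and `tanh (m t) ≤ m tanh t`.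
-/

open Real

lemma LM_comm (x y : ℝ) : LM x y = LM y x := by
  rcases eq_or_ne x y with rfl | h
  · rfl
  · simp only [LM, h, h.symm, if_false]
    rw [← neg_sub x y, ← neg_sub (log x) (log y), neg_div_neg_eq]

lemma Amean_comm (α x y : ℝ) : Amean α x y = Amean α y x := by
  rcases eq_or_ne x y with rfl | h
  · rfl
  · simp only [Amean, h, h.symm, if_false, LM_comm x y]
    rw [← neg_sub x y, ← neg_sub (x ^ α) (y ^ α), add_comm (y ^ α), mul_neg, mul_neg,
      neg_div_neg_eq]

lemma Gmean_comm (α x y : ℝ) : Gmean α x y = Gmean α y x := by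
  rcases eq_or_ne x y with rfl | h
  · rfl
  · simp only [Gmean, h, h.symm, if_false, LM_comm x y]
    rw [← neg_sub x y, ← neg_sub (x ^ α) (y ^ α), mul_comm y, mul_neg, neg_div_neg_eq]

lemma Mmean_comm (α x y : ℝ) : Mmean α x y = Mmean α y x := by
  rcases eq_or_ne x y with rfl | h
  · rfl
  · simp only [Mmean, h, h.symm, if_false]
    rw [← neg_sub (x ^ α) (y ^ α), ← neg_sub (x ^ (α - 1)) (y ^ (α - 1)), mul_neg,
      neg_div_neg_eq]

section hyperbolic

variable {g h : ℝ}

lemma mul_exp_ne_mul_exp_neg (hg : 0 < g) (hh : h ≠ 0) : g * exp h ≠ g * exp (-h) := by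
  rw [Ne, mul_right_inj' hg.ne', exp_eq_exp]
  contrapose! hh
  linarith

lemma mul_exp_sub_mul_exp_neg : g * exp h - g * exp (-h) = g * (2 * sinh h) := by
  rw [sinh_eq]
  ring

lemma mul_exp_rpow (hg : 0 ≤ g) (h α : ℝ) : (g * exp h) ^ α = g ^ α * exp (α * h) := by
  rw [mul_rpow hg (exp_pos h).le, ← exp_mul, mul_comm h]

lemma mul_exp_rpow_sub (hg : 0 ≤ g) (h α : ℝ) :
    (g * exp h) ^ α - (g * exp (-h)) ^ α = g ^ α * (2 * sinh (α * h)) := by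
  rw [mul_exp_rpow hg, mul_exp_rpow hg, mul_neg, ← mul_exp_sub_mul_exp_neg]

lemma mul_exp_rpow_add (hg : 0 ≤ g) (h α : ℝ) :
    (g * exp h) ^ α + (g * exp (-h)) ^ α = g ^ α * (2 * cosh (α * h)) := by
  rw [mul_exp_rpow hg, mul_exp_rpow hg, cosh_eq, mul_neg]
  ring

lemma LM_mul_exp (hg : 0 < g) (hh : h ≠ 0) :
    LM (g * exp h) (g * exp (-h)) = g * sinh h / h := by
  rw [LM, if_neg (mul_exp_ne_mul_exp_neg hg hh), log_mul hg.ne' (exp_pos _).ne',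
    log_mul hg.ne' (exp_pos _).ne', log_exp, log_exp, mul_exp_sub_mul_exp_neg,
    show log g + h - (log g + -h) = 2 * h by ring]
  field_simp

lemma Gmean_mul_exp (hg : 0 < g) (hh : h ≠ 0) {α : ℝ} (hα : α ≠ 0) :
    Gmean α (g * exp h) (g * exp (-h)) = g * α * sinh h / sinh (α * h) := by
  have hgg : g * exp h * (g * exp (-h)) = g ^ (2 : ℝ) := by
    rw [rpow_two, mul_mul_mul_comm, ← exp_add, add_neg_cancel, exp_zero, mul_one, sq]
  have hsinh : sinh (α * h) ≠ 0 := sinh_ne_zero.2 (mul_ne_zero hα hh)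
  rw [Gmean, if_neg (mul_exp_ne_mul_exp_neg hg hh), if_neg hα, hgg, ← rpow_mul hg.le,
    mul_exp_rpow_sub hg.le, mul_exp_sub_mul_exp_neg]
  field_simp

lemma Amean_mul_exp (hg : 0 < g) (hh : h ≠ 0) {α : ℝ} (hα : α ≠ 0) :
    Amean α (g * exp h) (g * exp (-h)) = g * α * sinh h * cosh (α * h) / sinh (α * h) := by
  have hsinh : sinh (α * h) ≠ 0 := sinh_ne_zero.2 (mul_ne_zero hα hh)
  rw [Amean, if_neg (mul_exp_ne_mul_exp_neg hg hh), if_neg hα, mul_exp_rpow_sub hg.le,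
    mul_exp_rpow_add hg.le, mul_exp_sub_mul_exp_neg]
  field_simp

lemma Mmean_mul_exp (hg : 0 < g) (hh : h ≠ 0) (α : ℝ) :
    Mmean α (g * exp h) (g * exp (-h)) =
      g * ((α - 1) / α) * sinh (α * h) / sinh ((α - 1) * h) := by
  rw [Mmean, if_neg (mul_exp_ne_mul_exp_neg hg hh), mul_exp_rpow_sub hg.le,
    mul_exp_rpow_sub hg.le, rpow_sub_one hg.ne']
  rcases eq_or_ne (sinh ((α - 1) * h)) 0 with h0 | h0
  · simp [h0] -- includes `α = 1`, where both sides are junk divisions by zero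
  · field_simp

end hyperbolic

lemma sinh_nat_mul (m : ℕ) (t : ℝ) :
    sinh (m * t) = sinh t * ∑ k ∈ Finset.range m, cosh ((m - 1 - 2 * k : ℝ) * t) := by
  have hstep (k : ℕ) : 2 * (sinh t * cosh ((m - 1 - 2 * k : ℝ) * t)) =
      sinh ((m - 2 * k : ℝ) * t) - sinh ((m - 2 * (k + 1 : ℕ) : ℝ) * t) := by
    rw [show (m - 2 * k : ℝ) * t = (m - 1 - 2 * k : ℝ) * t + t by ring,
      show (m - 2 * (k + 1 : ℕ) : ℝ) * t = (m - 1 - 2 * k : ℝ) * t - t by push_cast; ring,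
      sinh_add, sinh_sub]
    ring
  have htele := Finset.sum_range_sub' (fun k : ℕ => sinh ((m - 2 * k : ℝ) * t)) m
  simp only [← hstep, ← Finset.mul_sum] at htele
  rw [show (m - 2 * m : ℝ) * t = -(m * t) by ring, sinh_neg] at htele
  simp only [Nat.cast_zero, mul_zero, sub_zero] at htele
  linarith

lemma sinh_nat_mul_div_sinh_le (m : ℕ) {s t : ℝ} (hs : 0 < s) (hst : s ≤ t) :
    sinh (m * s) / sinh s ≤ sinh (m * t) / sinh t := by
  rw [sinh_nat_mul, sinh_nat_mul, mul_div_cancel_left₀ _ (sinh_pos_iff.2 hs).ne',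
    mul_div_cancel_left₀ _ (sinh_pos_iff.2 (hs.trans_le hst)).ne']
  refine Finset.sum_le_sum fun k _ => cosh_le_cosh.2 ?_
  rw [abs_mul, abs_mul, abs_of_pos hs, abs_of_pos (hs.trans_le hst)]
  exact mul_le_mul_of_nonneg_left hst (abs_nonneg _)

lemma sinh_le_mul_cosh {t : ℝ} (ht : 0 ≤ t) : sinh t ≤ t * cosh t := by
  have hderiv (s : ℝ) : HasDerivAt (fun s => s * cosh s - sinh s) (s * sinh s) s := by
    have hmul : HasDerivAt (fun s => s * cosh s) (1 * cosh s + s * sinh s) s :=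
      (hasDerivAt_id s).mul (hasDerivAt_cosh s)
    exact (hmul.sub (hasDerivAt_sinh s)).congr_deriv (by ring)
  have hmono : MonotoneOn (fun s => s * cosh s - sinh s) (Set.Ici 0) := by
    refine monotoneOn_of_hasDerivWithinAt_nonneg (convex_Ici 0) (by fun_prop)
      (fun s _ => (hderiv s).hasDerivWithinAt) fun s hs => ?_
    rw [interior_Ici] at hs
    exact mul_nonneg hs.out.le (sinh_nonneg_iff.2 hs.out.le)
  simpa using hmono Set.self_mem_Ici ht ht

lemma sinh_nat_mul_mul_cosh_le (m : ℕ) {t : ℝ} (ht : 0 ≤ t) :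
    sinh (m * t) * cosh t ≤ m * (cosh (m * t) * sinh t) := by
  induction m with
  | zero => simp
  | succ m ih =>
    have hsinh_mt : 0 ≤ sinh (m * t) := sinh_nonneg_iff.2 (by positivity)
    have hsinh_t : 0 ≤ sinh t := sinh_nonneg_iff.2 ht
    rw [Nat.cast_succ, add_mul, one_mul, sinh_add, cosh_add]
    nlinarith [mul_le_mul_of_nonneg_right ih (cosh_pos t).le, mul_nonneg hsinh_mt hsinh_t,
      mul_nonneg (mul_nonneg hsinh_mt hsinh_t) hsinh_t, cosh_pos (m * t), cosh_pos t]

section mean_ineq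

variable {g t : ℝ} {m : ℕ}

lemma Mmean_le_Gmean_mul_exp (hg : 0 < g) (ht : 0 < t) (hm : 1 ≤ m) :
    Mmean (m / (m + 1)) (g * exp (m * t)) (g * exp (-(m * t))) ≤
      Gmean (1 / m) (g * exp (m * t)) (g * exp (-(m * t))) := by
  have hm0 : (0 : ℝ) < m := by exact_mod_cast hm
  have hmt : 0 < (m : ℝ) * t := by positivity
  set s := m * t / (m + 1) with hs_def
  have hs : 0 < s := by positivity
  have hst : s ≤ t := by
    rw [hs_def, div_le_iff₀ (by positivity)]
    linarith
  rw [Mmean_mul_exp hg hmt.ne', Gmean_mul_exp hg hmt.ne' (by positivity),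
    show (m / (m + 1) : ℝ) * (m * t) = m * s by ring,
    show ((m / (m + 1) : ℝ) - 1) * (m * t) = -s by rw [hs_def]; field_simp; ring,
    show ((m / (m + 1) : ℝ) - 1) / (m / (m + 1)) = -(1 / m) by field_simp; ring,
    show 1 / (m : ℝ) * (m * t) = t by field_simp, sinh_neg]
  calc g * -(1 / m) * sinh (m * s) / -sinh s = g / m * (sinh (m * s) / sinh s) := by ring
    _ ≤ g / m * (sinh (m * t) / sinh t) :=
      mul_le_mul_of_nonneg_left (sinh_nat_mul_div_sinh_le m hs hst) (by positivity)
    _ = g * (1 / m) * sinh (m * t) / sinh t := by ring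

lemma Gmean_le_LM_mul_exp (hg : 0 < g) (ht : 0 < t) (hm : 1 ≤ m) :
    Gmean (1 / m) (g * exp (m * t)) (g * exp (-(m * t))) ≤
      LM (g * exp (m * t)) (g * exp (-(m * t))) := by
  have hm0 : (0 : ℝ) < m := by exact_mod_cast hm
  have hmt : 0 < (m : ℝ) * t := by positivity
  rw [Gmean_mul_exp hg hmt.ne' (by positivity), LM_mul_exp hg hmt.ne',
    show 1 / (m : ℝ) * (m * t) = t by field_simp]
  calc g * (1 / m) * sinh (m * t) / sinh t = g * sinh (m * t) / (m * sinh t) := by ring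
    _ ≤ g * sinh (m * t) / (m * t) :=
      div_le_div_of_nonneg_left (mul_nonneg hg.le (sinh_nonneg_iff.2 hmt.le)) hmt
        (mul_le_mul_of_nonneg_left (self_le_sinh_iff.2 ht.le) hm0.le)

lemma LM_le_Amean_mul_exp (hg : 0 < g) (ht : 0 < t) (hm : 1 ≤ m) :
    LM (g * exp (m * t)) (g * exp (-(m * t))) ≤
      Amean (1 / m) (g * exp (m * t)) (g * exp (-(m * t))) := by
  have hm0 : (0 : ℝ) < m := by exact_mod_cast hm
  have hmt : 0 < (m : ℝ) * t := by positivity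
  rw [Amean_mul_exp hg hmt.ne' (by positivity), LM_mul_exp hg hmt.ne',
    show 1 / (m : ℝ) * (m * t) = t by field_simp]
  calc g * sinh (m * t) / (m * t) = g * sinh (m * t) / m * (1 / t) := by ring
    _ ≤ g * sinh (m * t) / m * (cosh t / sinh t) := by
      refine mul_le_mul_of_nonneg_left ?_ (by positivity)
      rw [div_le_div_iff₀ ht (sinh_pos_iff.2 ht)]
      linarith [sinh_le_mul_cosh ht.le]
    _ = g * (1 / m) * sinh (m * t) * cosh t / sinh t := by ring

lemma Amean_le_Mmean_mul_exp (hg : 0 < g) (ht : 0 < t) (hm : 1 ≤ m) :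
    Amean (1 / m) (g * exp (m * t)) (g * exp (-(m * t))) ≤
      Mmean ((m + 1) / m) (g * exp (m * t)) (g * exp (-(m * t))) := by
  have hm0 : (0 : ℝ) < m := by exact_mod_cast hm
  have hmt : 0 < (m : ℝ) * t := by positivity
  rw [Amean_mul_exp hg hmt.ne' (by positivity), Mmean_mul_exp hg hmt.ne',
    show 1 / (m : ℝ) * (m * t) = t by field_simp,
    show ((m + 1) / m : ℝ) * (m * t) = m * t + t by field_simp,
    show (((m + 1) / m : ℝ) - 1) * (m * t) = t by field_simp; ring,
    show (((m + 1) / m : ℝ) - 1) / ((m + 1) / m) = 1 / (m + 1) by field_simp; ring,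
    sinh_add, div_le_div_iff_of_pos_right (sinh_pos_iff.2 ht)]
  calc g * (1 / m) * sinh (m * t) * cosh t
        = g / (m * (m + 1)) * ((m + 1) * (sinh (m * t) * cosh t)) := by field_simp
    _ ≤ g / (m * (m + 1)) * (m * (sinh (m * t) * cosh t + cosh (m * t) * sinh t)) := by
      refine mul_le_mul_of_nonneg_left ?_ (by positivity)
      linarith [sinh_nat_mul_mul_cosh_le m ht.le]
    _ = g * (1 / (m + 1)) * (sinh (m * t) * cosh t + cosh (m * t) * sinh t) := by
      field_simp

end mean_ineq

lemma exists_eq_mul_exp_nat_mul {x y : ℝ} (hy : 0 < y) (hyx : y < x) {m : ℕ} (hm : 1 ≤ m) :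
    ∃ g t, 0 < g ∧ 0 < t ∧ x = g * exp (m * t) ∧ y = g * exp (-(m * t)) := by
  have hm0 : (0 : ℝ) < m := by exact_mod_cast hm
  have hlog : log y < log x := log_lt_log hy hyx
  refine ⟨exp ((log x + log y) / 2), (log x - log y) / (2 * m), exp_pos _,
    div_pos (by linarith) (by positivity), ?_, ?_⟩
  · rw [← exp_add, show (log x + log y) / 2 + m * ((log x - log y) / (2 * m)) = log x by
      field_simp; ring, exp_log (hy.trans hyx)]
  · rw [← exp_add, show (log x + log y) / 2 + -(m * ((log x - log y) / (2 * m))) = log y by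
      field_simp; ring, exp_log hy]

/-- For `m ≥ 1` and `x, y > 0`:
`M_{m/(m+1)} ≤ G_{1/m} ≤ LM ≤ A_{1/m} ≤ M_{(m+1)/m}`. -/
theorem statement8 (m : ℕ) (hm : 1 ≤ m) (x y : ℝ) (hx : 0 < x) (hy : 0 < y) :
    Mmean ((m : ℝ) / ((m : ℝ) + 1)) x y ≤ Gmean (1 / (m : ℝ)) x y ∧
    Gmean (1 / (m : ℝ)) x y ≤ LM x y ∧
    LM x y ≤ Amean (1 / (m : ℝ)) x y ∧
    Amean (1 / (m : ℝ)) x y ≤ Mmean (((m : ℝ) + 1) / (m : ℝ)) x y := by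
  wlog hyx : y < x generalizing x y
  · rcases (not_lt.1 hyx).eq_or_lt with rfl | hxy
    · simp [LM, Amean, Gmean, Mmean]
    · simpa only [Mmean_comm _ x y, Gmean_comm _ x y, LM_comm x y, Amean_comm _ x y]
        using this y x hy hx hxy
  obtain ⟨g, t, hg, ht, rfl, rfl⟩ := exists_eq_mul_exp_nat_mul hy hyx hm
  exact ⟨Mmean_le_Gmean_mul_exp hg ht hm, Gmean_le_LM_mul_exp hg ht hm,
    LM_le_Amean_mul_exp hg ht hm, Amean_le_Mmean_mul_exp hg ht hm⟩
end

section
/- Let m₁ ≥ 1 and m₂ ≥ 2 be natural numbers, let S, T be positive definite Hermitian n×n complex matrices and X any n×n complex matrix. Then, with ‖·‖_F the Frobenius norm: ‖(1/m₁)Σ_{k=1}^{m₁} S^{k/(m₁+1)} X T^{(m₁+1−k)/(m₁+1)}‖_F ≤ ‖(1/m₁)Σ_{k=1}^{m₁} S^{(2k−1)/(2m₁)} X T^{(2m₁−2k+1)/(2m₁)}‖_F ≤ ‖∫₀¹ S^ν X T^{1−ν} dν‖_F ≤ ‖(1/m₂)(Σ_{k=0}^{m₂} S^{k/m₂} X T^{(m₂−k)/m₂}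 − (SX + XT)/2)‖_F ≤ ‖(1/m₂)Σ_{k=0}^{m₂−1} S^{k/(m₂−1)} X T^{(m₂−1−k)/(m₂−1)}‖_F. -/
open scoped ComplexOrder

/-- The matrix power `S^ν` of a Hermitian matrix, defined by applying `x ↦ x ^ ν` to the
eigenvalues in a spectral decomposition (continuous functional calculus). -/
noncomputable def matPow {n : ℕ} (S : Matrix (Fin n) (Fin n) ℂ) (hS : S.IsHermitian)
    (ν : ℝ) : Matrix (Fin n) (Fin n) ℂ :=
  (hS.eigenvectorUnitary : Matrix (Fin n) (Fin n) ℂ) *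
    Matrix.diagonal (fun i => ((hS.eigenvalues i ^ ν : ℝ) : ℂ)) *
    (star hS.eigenvectorUnitary : Matrix (Fin n) (Fin n) ℂ)

/-- `N` is a unitarily invariant norm on `n × n` complex matrices. -/
def UnitarilyInvariantNorm {n : ℕ} (N : Matrix (Fin n) (Fin n) ℂ → ℝ) : Prop :=
  (∀ A, 0 ≤ N A) ∧
  (∀ A B, N (A + B) ≤ N A + N B) ∧
  (∀ (c : ℂ) (A), N (c • A) = ‖c‖ * N A) ∧
  (∀ U V : Matrix (Fin n) (Fin n) ℂ, U ∈ Matrix.unitaryGroup (Fin n) ℂ →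
    V ∈ Matrix.unitaryGroup (Fin n) ℂ → ∀ A, N (U * A * V) = N A)
attribute [local instance] Matrix.frobeniusNormedAddCommGroup Matrix.frobeniusNormedSpace

/-- The Frobenius norm. -/
noncomputable def frobNorm {n : ℕ} (A : Matrix (Fin n) (Fin n) ℂ) : ℝ :=
  Real.sqrt (∑ i, ∑ j, ‖A i j‖ ^ 2)

/-!
Diagonalise `S = U diag(λ) U*`, `T = V diag(μ) V*` and put `Y = U* X V`. Each matrix in the
chain is `U (C ∘ Y) V*`, where `C i j` is a quadrature rule on `[0, 1]` (or the integral)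
applied to the convex function `g i j ν = λ i ^ ν * μ j ^ (1 - ν)`. The Frobenius norm is
unitarily invariant and monotone in a nonnegative Schur multiplier `C`, so the chain reduces to
"open-grid mean ≤ midpoint rule ≤ integral ≤ trapezoid rule ≤ closed-grid mean" for convex
functions. All of these come from one fact: for convex `f`, `f (c + u) + f (c - u)` grows with
`|u|`; it gives the Hermite–Hadamard inequalities on each cell as well as the pairing of
symmetric nodes.
-/
open Set Finset
open scoped Matrix

theorem Finset.sum_le_sum_of_add_involution {ι : Type*} {s : Finset ι} (σ : ι → ι)
    (hσ : ∀ k ∈ s, σ k ∈ s) (hσσ : ∀ k ∈ s, σ (σ k) = k) {F G : ι → ℝ}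
    (h : ∀ k ∈ s, F k + F (σ k) ≤ G k + G (σ k)) :
    ∑ k ∈ s, F k ≤ ∑ k ∈ s, G k := by
  have hreindex : ∀ H : ι → ℝ, ∑ k ∈ s, H (σ k) = ∑ k ∈ s, H k := fun H =>
    sum_nbij' σ σ hσ hσ hσσ hσσ fun _ _ => rfl
  have := sum_le_sum h
  rw [sum_add_distrib, sum_add_distrib, hreindex, hreindex] at this
  linarith

section Quadrature

noncomputable def openGridMean (m : ℕ) (f : ℝ → ℝ) : ℝ :=
  1 / m * ∑ k ∈ Icc 1 m, f (k / (m + 1))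

noncomputable def midpointRule (m : ℕ) (f : ℝ → ℝ) : ℝ :=
  1 / m * ∑ k ∈ Icc 1 m, f ((2 * k - 1) / (2 * m))

noncomputable def trapezoidRule (m : ℕ) (f : ℝ → ℝ) : ℝ :=
  1 / m * (∑ k ∈ range (m + 1), f (k / m) - (f 0 + f 1) / 2)

noncomputable def closedGridMean (m : ℕ) (f : ℝ → ℝ) : ℝ :=
  1 / m * ∑ k ∈ range m, f (k / (m - 1))

variable {f : ℝ → ℝ}

theorem ConvexOn.add_reflect_le {s : Set ℝ} (hf : ConvexOn ℝ s f) {c u v : ℝ}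
    (hv₁ : c + v ∈ s) (hv₂ : c - v ∈ s) (huv : |u| ≤ |v|) :
    f (c + u) + f (c - u) ≤ f (c + v) + f (c - v) := by
  rcases eq_or_ne v 0 with rfl | hv
  · rw [abs_zero, abs_nonpos_iff] at huv
    rw [huv]
  obtain ⟨hθ₁, hθ₂⟩ := abs_le.1 (show |u / v| ≤ 1 by
    rw [abs_div]; exact div_le_one_of_le₀ huv (abs_nonneg v))
  have h₁ := hf.2 hv₁ hv₂ (show 0 ≤ (1 + u / v) / 2 by linarith)
    (show 0 ≤ (1 - u / v) / 2 by linarith) (by ring)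
  have h₂ := hf.2 hv₁ hv₂ (show 0 ≤ (1 - u / v) / 2 by linarith)
    (show 0 ≤ (1 + u / v) / 2 by linarith) (by ring)
  simp only [smul_eq_mul] at h₁ h₂
  rw [show (1 + u / v) / 2 * (c + v) + (1 - u / v) / 2 * (c - v) = c + u by
    field_simp; ring] at h₁
  rw [show (1 - u / v) / 2 * (c + v) + (1 + u / v) / 2 * (c - v) = c - u by
    field_simp; ring] at h₂
  linarith

theorem ConvexOn.two_mul_le_add_reflect (hf : ConvexOn ℝ univ f) (a b x : ℝ) :
    2 * f ((a + b) / 2) ≤ f x + f (a + b - x) := by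
  have := hf.add_reflect_le (c := (a + b) / 2) (u := 0) (v := x - (a + b) / 2)
    (mem_univ _) (mem_univ _) (by simp)
  convert this using 2 <;> ring_nf

theorem ConvexOn.add_reflect_le_of_mem_Icc (hf : ConvexOn ℝ univ f) {a b x : ℝ}
    (hx : x ∈ Icc a b) : f x + f (a + b - x) ≤ f a + f b := by
  obtain ⟨hax, hxb⟩ := hx
  have := hf.add_reflect_le (c := (a + b) / 2) (u := x - (a + b) / 2) (v := (b - a) / 2)
    (mem_univ _) (mem_univ _)
    (by rw [abs_le, abs_of_nonneg (by linarith)]; constructor <;> linarith)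
  rw [add_comm (f a)]
  convert this using 2 <;> ring_nf

theorem ConvexOn.continuous_of_univ (hf : ConvexOn ℝ univ f) : Continuous f :=
  continuousOn_univ.1 (hf.continuousOn isOpen_univ)

theorem intervalIntegral.integral_add_reflect (hf : Continuous f) (a b : ℝ) :
    ∫ x in a..b, (f x + f (a + b - x)) = 2 * ∫ x in a..b, f x := by
  rw [intervalIntegral.integral_add (hf.intervalIntegrable _ _)
    ((show Continuous fun x => f (a + b - x) by fun_prop).intervalIntegrable _ _),
    intervalIntegral.integral_comp_sub_left f (a + b), add_sub_cancel_right,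
    add_sub_cancel_left, two_mul]

theorem ConvexOn.mul_le_intervalIntegral (hf : ConvexOn ℝ univ f) {a b : ℝ} (hab : a ≤ b) :
    (b - a) * f ((a + b) / 2) ≤ ∫ x in a..b, f x := by
  have hfc := hf.continuous_of_univ
  have := intervalIntegral.integral_mono_on (μ := MeasureTheory.volume) hab
    intervalIntegrable_const
    ((show Continuous fun x => f x + f (a + b - x) by fun_prop).intervalIntegrable a b)
    (fun x _ => hf.two_mul_le_add_reflect a b x)
  rw [intervalIntegral.integral_const, smul_eq_mul,
    intervalIntegral.integral_add_reflect hfc] at this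
  linarith

theorem ConvexOn.intervalIntegral_le (hf : ConvexOn ℝ univ f) {a b : ℝ} (hab : a ≤ b) :
    ∫ x in a..b, f x ≤ (b - a) * ((f a + f b) / 2) := by
  have hfc := hf.continuous_of_univ
  have := intervalIntegral.integral_mono_on (μ := MeasureTheory.volume) hab
    ((show Continuous fun x => f x + f (a + b - x) by fun_prop).intervalIntegrable a b)
    intervalIntegrable_const (fun x hx => hf.add_reflect_le_of_mem_Icc hx)
  rw [intervalIntegral.integral_const, smul_eq_mul,
    intervalIntegral.integral_add_reflect hfc] at this
  linarith

theorem intervalIntegral.integral_zero_one_eq_sum (hf : Continuous f) {m : ℕ} (hm : 0 < m) :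
    ∫ x in (0 : ℝ)..1, f x = ∑ k ∈ range m, ∫ x in (k / m : ℝ)..((k + 1) / m), f x := by
  have := intervalIntegral.sum_integral_adjacent_intervals (a := fun k : ℕ => (k / m : ℝ))
    (n := m) (μ := MeasureTheory.volume) fun k _ => hf.intervalIntegrable _ _
  simp only [Nat.cast_zero, zero_div, Nat.cast_add, Nat.cast_one] at this
  rw [div_self (by positivity)] at this
  exact this.symm

theorem openGridMean_nonneg (hf : ∀ x, 0 ≤ f x) (m : ℕ) : 0 ≤ openGridMean m f :=
  mul_nonneg (by positivity) (sum_nonneg fun _ _ => hf _)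

theorem midpointRule_nonneg (hf : ∀ x, 0 ≤ f x) (m : ℕ) : 0 ≤ midpointRule m f :=
  mul_nonneg (by positivity) (sum_nonneg fun _ _ => hf _)

theorem ConvexOn.openGridMean_le_midpointRule (hf : ConvexOn ℝ univ f) (m : ℕ) :
    openGridMean m f ≤ midpointRule m f := by
  refine mul_le_mul_of_nonneg_left ?_ (by positivity)
  refine sum_le_sum_of_add_involution (fun k => m + 1 - k)
    (fun k hk => by simp only [Finset.mem_Icc] at hk ⊢; omega)
    (fun k hk => by simp only [Finset.mem_Icc] at hk; omega) fun k hk => ?_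
  simp only [Finset.mem_Icc] at hk
  have hm : (0 : ℝ) < m := by exact_mod_cast hk.1.trans hk.2
  have hcast : ((m + 1 - k : ℕ) : ℝ) = m + 1 - k := by
    rw [Nat.cast_sub (by omega)]; push_cast; ring
  rw [hcast]
  have key := hf.add_reflect_le (c := 1 / 2) (u := (2 * k - m - 1) / (2 * (m + 1)))
    (v := (2 * k - m - 1) / (2 * m)) (mem_univ _) (mem_univ _) (by
      rw [abs_div, abs_div]
      exact div_le_div_of_nonneg_left (abs_nonneg _) (by positivity)
        (by rw [abs_of_pos (by positivity), abs_of_pos (by positivity)]; linarith))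
  convert key using 3 <;> field_simp <;> ring

theorem ConvexOn.midpointRule_le_integral (hf : ConvexOn ℝ univ f) {m : ℕ} (hm : 0 < m) :
    midpointRule m f ≤ ∫ x in (0 : ℝ)..1, f x := by
  have hm' : (0 : ℝ) < m := by exact_mod_cast hm
  rw [midpointRule, intervalIntegral.integral_zero_one_eq_sum hf.continuous_of_univ hm,
    ← Finset.Ico_add_one_right_eq_Icc, sum_Ico_eq_sum_range, Nat.add_sub_cancel, mul_sum]
  refine sum_le_sum fun k _ => ?_
  have := hf.mul_le_intervalIntegral (a := k / m) (b := (k + 1) / m) (by gcongr; linarith)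
  rwa [show ((k : ℝ) + 1) / m - k / m = 1 / m by ring,
    show ((k / m + (k + 1) / m) / 2 : ℝ) = (2 * ((1 + k : ℕ) : ℝ) - 1) / (2 * m) by
      push_cast; field_simp; ring] at this

theorem ConvexOn.integral_le_trapezoidRule (hf : ConvexOn ℝ univ f) {m : ℕ} (hm : 0 < m) :
    ∫ x in (0 : ℝ)..1, f x ≤ trapezoidRule m f := by
  have hm' : (0 : ℝ) < m := by exact_mod_cast hm
  have hends : ∑ k ∈ range (m + 1), f (k / m) - (f 0 + f 1) / 2
      = ∑ k ∈ range m, (f (k / m) + f ((k + 1) / m)) / 2 := by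
    have h₁ := sum_range_succ (fun k : ℕ => f (k / m)) m
    have h₂ := sum_range_succ' (fun k : ℕ => f (k / m)) m
    rw [div_self hm'.ne'] at h₁
    simp only [Nat.cast_zero, zero_div, Nat.cast_add, Nat.cast_one] at h₂
    rw [← sum_div, sum_add_distrib]
    linarith
  rw [trapezoidRule, hends, intervalIntegral.integral_zero_one_eq_sum hf.continuous_of_univ hm,
    mul_sum]
  refine sum_le_sum fun k _ => ?_
  have := hf.intervalIntegral_le (a := k / m) (b := (k + 1) / m) (by gcongr; linarith)
  rwa [show ((k : ℝ) + 1) / m - k / m = 1 / m by ring] at this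

theorem ConvexOn.sum_range_div_le (hf : ConvexOn ℝ univ f) {E : ℕ} (hE : 0 < E) :
    ∑ i ∈ range (E + 1), f (i / E) ≤ (E + 1) * ((f 0 + f 1) / 2) := by
  have hE' : (0 : ℝ) < E := by exact_mod_cast hE
  have := sum_le_sum_of_add_involution (s := range (E + 1)) (fun i => E - i)
    (fun i hi => by simp only [Finset.mem_range] at hi ⊢; omega)
    (fun i hi => by simp only [Finset.mem_range] at hi; omega)
    (F := fun i : ℕ => f (i / E)) (G := fun _ => (f 0 + f 1) / 2) fun i hi => by
      simp only [Finset.mem_range] at hi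
      have hx : (i / E : ℝ) ∈ Set.Icc 0 1 :=
        ⟨by positivity, div_le_one_of_le₀ (by exact_mod_cast Nat.lt_succ_iff.1 hi) hE'.le⟩
      have := hf.add_reflect_le_of_mem_Icc hx
      rw [zero_add] at this
      rw [Nat.cast_sub (Nat.lt_succ_iff.1 hi), sub_div, div_self hE'.ne']
      linarith
  simpa using this

theorem ConvexOn.trapezoidRule_le_closedGridMean (hf : ConvexOn ℝ univ f) {m : ℕ}
    (hm : 2 ≤ m) : trapezoidRule m f ≤ closedGridMean m f := by
  obtain ⟨E, rfl⟩ : ∃ E, m = E + 1 := ⟨m - 1, by omega⟩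
  have hE : (0 : ℝ) < E := by exact_mod_cast (show 0 < E by omega)
  rw [trapezoidRule, closedGridMean]
  push_cast
  rw [add_sub_cancel_right]
  refine mul_le_mul_of_nonneg_left ?_ (by positivity)
  set R := ∑ i ∈ range (E + 1), f (i / E) with hR
  -- each node `k / (E + 1)` is a convex combination of the neighbouring nodes of the coarser grid
  have hnode : ∀ k ∈ range (E + 1 + 1), f (k / (E + 1)) ≤
      k / (E + 1) * f ((k - 1) / E) + (E + 1 - k) / (E + 1) * f (k / E) := by
    intro k hk
    have hk' : (k : ℝ) ≤ E + 1 := by exact_mod_cast Nat.lt_succ_iff.1 (mem_range.1 hk)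
    have := hf.2 (mem_univ (((k : ℝ) - 1) / E)) (mem_univ ((k : ℝ) / E))
      (show 0 ≤ (k : ℝ) / (E + 1) by positivity)
      (show 0 ≤ (E + 1 - k : ℝ) / (E + 1) from div_nonneg (by linarith) (by positivity))
      (by field_simp; ring)
    simp only [smul_eq_mul] at this
    rwa [show (k : ℝ) / (E + 1) * ((k - 1) / E) + (E + 1 - k) / (E + 1) * (k / E)
      = k / (E + 1) by field_simp; ring] at this
  have hcoarse : ∑ k ∈ range (E + 1 + 1),
      (k / (E + 1) * f ((k - 1) / E) + (E + 1 - k) / (E + 1) * f (k / E))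
      = (E + 2) / (E + 1) * R := by
    rw [sum_add_distrib, sum_range_succ' (fun k : ℕ => k / (E + 1) * f ((k - 1) / E)),
      sum_range_succ (fun k : ℕ => (E + 1 - k) / (E + 1) * f (k / E)), hR, mul_sum]
    push_cast
    simp only [zero_div, zero_mul, add_zero, sub_self, add_sub_cancel_right]
    rw [← sum_add_distrib]
    refine sum_congr rfl fun i _ => ?_
    field_simp; ring
  have hR_le : R / (E + 1) ≤ (f 0 + f 1) / 2 := by
    rw [div_le_iff₀ (by positivity)]
    linarith [hf.sum_range_div_le (E := E) (by omega)]
  have : (E + 2) / (E + 1) * R = R + R / (E + 1) := by field_simp; ring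
  linarith [(sum_le_sum hnode).trans_eq hcoarse]

end Quadrature

theorem convexOn_rpow_mul_rpow_one_sub {a b : ℝ} (ha : 0 < a) (hb : 0 < b) :
    ConvexOn ℝ univ fun ν : ℝ => a ^ ν * b ^ (1 - ν) := by
  have : (fun ν : ℝ => a ^ ν * b ^ (1 - ν)) = fun ν => b • (a / b) ^ ν := by
    ext ν
    rw [smul_eq_mul, Real.div_rpow ha.le hb.le, Real.rpow_sub hb, Real.rpow_one]
    field_simp
  rw [this]
  exact (convexOn_rpow_left (div_pos ha hb)).smul hb.le

section EigenSchur

variable {n : ℕ} {S T : Matrix (Fin n) (Fin n) ℂ}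

/-- The Schur multiplier `c` acting in the eigenbases of `S` and `T`: `U (c ∘ (U* X V)) V*`. -/
noncomputable def eigenSchur (hS : S.IsHermitian) (hT : T.IsHermitian)
    (X : Matrix (Fin n) (Fin n) ℂ) : (Fin n → Fin n → ℝ) →ₗ[ℝ] Matrix (Fin n) (Fin n) ℂ where
  toFun c := (hS.eigenvectorUnitary : Matrix (Fin n) (Fin n) ℂ) *
      Matrix.of (fun i j => (c i j : ℂ) *
        (star (hS.eigenvectorUnitary : Matrix (Fin n) (Fin n) ℂ) * X *
          (hT.eigenvectorUnitary : Matrix (Fin n) (Fin n) ℂ)) i j) *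
      star (hT.eigenvectorUnitary : Matrix (Fin n) (Fin n) ℂ)
  map_add' c c' := by
    rw [← Matrix.add_mul, ← Matrix.mul_add]; congr; ext i j; simp [add_mul]
  map_smul' r c := by
    rw [← Matrix.smul_mul, ← Matrix.mul_smul]; congr; ext i j
    simp [Complex.real_smul, mul_assoc]

variable (hS : S.IsHermitian) (hT : T.IsHermitian) (X : Matrix (Fin n) (Fin n) ℂ)

theorem matPow_mul_mul_matPow (r s : ℝ) :
    matPow S hS r * X * matPow T hT s =
      eigenSchur hS hT X (fun i j => hS.eigenvalues i ^ r * hT.eigenvalues j ^ s) := by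
  have hdiag : ∀ Y : Matrix (Fin n) (Fin n) ℂ,
      Matrix.diagonal (fun i => ((hS.eigenvalues i ^ r : ℝ) : ℂ)) * Y *
        Matrix.diagonal (fun j => ((hT.eigenvalues j ^ s : ℝ) : ℂ)) =
      Matrix.of fun i j => ((hS.eigenvalues i ^ r * hT.eigenvalues j ^ s : ℝ) : ℂ) * Y i j := by
    intro Y; ext i j
    simp only [Matrix.mul_diagonal, Matrix.diagonal_mul, Matrix.of_apply]
    push_cast; ring
  simp only [matPow, eigenSchur, LinearMap.coe_mk, AddHom.coe_mk, ← hdiag, Matrix.mul_assoc]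

theorem matPow_zero : matPow S hS 0 = 1 := by
  simp only [matPow, Real.rpow_zero, Complex.ofReal_one, Matrix.diagonal_one, Matrix.mul_one]
  exact_mod_cast (SetLike.coe_mem hS.eigenvectorUnitary).2

theorem matPow_one : matPow S hS 1 = S := by
  simp only [matPow, Real.rpow_one]
  exact hS.spectral_theorem.symm

theorem ofReal_smul_sum_eigenSchur {ι : Type*} (s : Finset ι) (r : ℝ)
    (c : ι → Fin n → Fin n → ℝ) :
    (r : ℂ) • ∑ k ∈ s, eigenSchur hS hT X (c k) =
      eigenSchur hS hT X (fun i j => r * ∑ k ∈ s, c k i j) := by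
  rw [Complex.coe_smul, ← map_sum, ← map_smul]
  congr; ext i j; simp [Finset.sum_apply]

theorem intervalIntegral_eigenSchur {c : ℝ → Fin n → Fin n → ℝ} (hc : Continuous c)
    (a b : ℝ) :
    ∫ ν in a..b, eigenSchur hS hT X (c ν) =
      eigenSchur hS hT X (fun i j => ∫ ν in a..b, c ν i j) := by
  let L := LinearMap.toContinuousLinearMap (eigenSchur hS hT X)
  have hint : IntervalIntegrable c MeasureTheory.volume a b := hc.intervalIntegrable a b
  rw [show eigenSchur hS hT X = ⇑L from rfl]
  refine (L.intervalIntegral_comp_comm hint).trans ?_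
  congr; ext i j
  let P := (ContinuousLinearMap.proj (R := ℝ) (φ := fun _ : Fin n => ℝ) j).comp
    (ContinuousLinearMap.proj (R := ℝ) (φ := fun _ : Fin n => Fin n → ℝ) i)
  exact (P.intervalIntegral_comp_comm hint).symm

theorem frobNorm_eq_sqrt_re_trace (A : Matrix (Fin n) (Fin n) ℂ) :
    frobNorm A = √(Aᴴ * A).trace.re := by
  simp only [frobNorm, Matrix.trace, Matrix.diag_apply, Matrix.mul_apply,
    Matrix.conjTranspose_apply, Complex.re_sum, RCLike.star_def, Complex.conj_mul',
    ← Complex.ofReal_pow, Complex.ofReal_re]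
  rw [Finset.sum_comm]

theorem frobNorm_mul_mul_star {U V : Matrix (Fin n) (Fin n) ℂ}
    (hU : U ∈ Matrix.unitaryGroup (Fin n) ℂ) (hV : V ∈ Matrix.unitaryGroup (Fin n) ℂ)
    (A : Matrix (Fin n) (Fin n) ℂ) : frobNorm (U * A * star V) = frobNorm A := by
  rw [frobNorm_eq_sqrt_re_trace, frobNorm_eq_sqrt_re_trace]
  have : (U * A * star V)ᴴ * (U * A * star V) = V * (Aᴴ * (star U * U) * A) * star V := by
    simp only [← Matrix.star_eq_conjTranspose, star_mul, star_star, Matrix.mul_assoc]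
  rw [this, Unitary.star_mul_self_of_mem hU, Matrix.mul_one, Matrix.trace_mul_cycle,
    Unitary.star_mul_self_of_mem hV, Matrix.one_mul]

theorem frobNorm_eigenSchur_le {c c' : Fin n → Fin n → ℝ} (h₀ : ∀ i j, 0 ≤ c i j)
    (h : ∀ i j, c i j ≤ c' i j) :
    frobNorm (eigenSchur hS hT X c) ≤ frobNorm (eigenSchur hS hT X c') := by
  have hU := SetLike.coe_mem hS.eigenvectorUnitary
  have hV := SetLike.coe_mem hT.eigenvectorUnitary
  simp only [eigenSchur, LinearMap.coe_mk, AddHom.coe_mk, frobNorm_mul_mul_star hU hV]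
  unfold frobNorm
  gcongr with i _ j _
  simp only [Matrix.of_apply, norm_mul, Complex.norm_real, Real.norm_eq_abs,
    abs_of_nonneg (h₀ i j), abs_of_nonneg ((h₀ i j).trans (h i j))]
  gcongr
  exact h i j

theorem matPow_mul_mul_matPow_of_add_eq_one {r s : ℝ} (h : r + s = 1) :
    matPow S hS r * X * matPow T hT s =
      eigenSchur hS hT X (fun i j => hS.eigenvalues i ^ r * hT.eigenvalues j ^ (1 - r)) := by
  rw [matPow_mul_mul_matPow, ← h, add_sub_cancel_left]

theorem eigenSchur_openGridMean (m : ℕ) :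
    eigenSchur hS hT X (fun i j =>
        openGridMean m fun ν => hS.eigenvalues i ^ ν * hT.eigenvalues j ^ (1 - ν)) =
      (1 / (m : ℂ)) • ∑ k ∈ Icc 1 m, matPow S hS ((k : ℝ) / ((m : ℝ) + 1)) * X *
        matPow T hT (((m : ℝ) + 1 - (k : ℝ)) / ((m : ℝ) + 1)) := by
  rw [sum_congr rfl fun k _ => matPow_mul_mul_matPow_of_add_eq_one hS hT X
      (by field_simp; ring),
    show (1 / (m : ℂ)) = ((1 / m : ℝ) : ℂ) by push_cast; rfl, ofReal_smul_sum_eigenSchur]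
  rfl

theorem eigenSchur_midpointRule (m : ℕ) :
    eigenSchur hS hT X (fun i j =>
        midpointRule m fun ν => hS.eigenvalues i ^ ν * hT.eigenvalues j ^ (1 - ν)) =
      (1 / (m : ℂ)) • ∑ k ∈ Icc 1 m, matPow S hS ((2 * (k : ℝ) - 1) / (2 * (m : ℝ))) * X *
        matPow T hT ((2 * (m : ℝ) - 2 * (k : ℝ) + 1) / (2 * (m : ℝ))) := by
  rw [sum_congr rfl fun k hk => matPow_mul_mul_matPow_of_add_eq_one hS hT X (by
      obtain ⟨hk₁, hk₂⟩ := Finset.mem_Icc.1 hk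
      have : (0 : ℝ) < m := by exact_mod_cast hk₁.trans hk₂
      field_simp; ring),
    show (1 / (m : ℂ)) = ((1 / m : ℝ) : ℂ) by push_cast; rfl, ofReal_smul_sum_eigenSchur]
  rfl

theorem eigenSchur_integral (hS₀ : ∀ i, 0 < hS.eigenvalues i)
    (hT₀ : ∀ j, 0 < hT.eigenvalues j) :
    eigenSchur hS hT X (fun i j =>
        ∫ ν in (0 : ℝ)..1, hS.eigenvalues i ^ ν * hT.eigenvalues j ^ (1 - ν)) =
      ∫ ν in (0 : ℝ)..1, matPow S hS ν * X * matPow T hT (1 - ν) := by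
  simp_rw [matPow_mul_mul_matPow]
  exact (intervalIntegral_eigenSchur hS hT X (continuous_pi fun i => continuous_pi fun j =>
    (convexOn_rpow_mul_rpow_one_sub (hS₀ i) (hT₀ j)).continuous_of_univ) 0 1).symm

theorem eigenSchur_trapezoidRule {m : ℕ} (hm : 0 < m) :
    eigenSchur hS hT X (fun i j =>
        trapezoidRule m fun ν => hS.eigenvalues i ^ ν * hT.eigenvalues j ^ (1 - ν)) =
      (1 / (m : ℂ)) • ((∑ k ∈ range (m + 1), matPow S hS ((k : ℝ) / (m : ℝ)) * X *
          matPow T hT (((m : ℝ) - (k : ℝ)) / (m : ℝ))) - (1 / 2 : ℂ) • (S * X + X * T)) := by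
  have hm' : (0 : ℝ) < m := by exact_mod_cast hm
  have hSXT : S * X + X * T = eigenSchur hS hT X (fun i j =>
      hS.eigenvalues i ^ (1 : ℝ) * hT.eigenvalues j ^ (1 - 1 : ℝ) +
        hS.eigenvalues i ^ (0 : ℝ) * hT.eigenvalues j ^ (1 - 0 : ℝ)) := by
    have hSX : S * X = matPow S hS 1 * X * matPow T hT 0 := by
      rw [matPow_one, matPow_zero, Matrix.mul_one]
    have hXT : X * T = matPow S hS 0 * X * matPow T hT 1 := by
      rw [matPow_one, matPow_zero, Matrix.one_mul]
    rw [hSX, hXT, matPow_mul_mul_matPow_of_add_eq_one hS hT X (add_zero 1),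
      matPow_mul_mul_matPow_of_add_eq_one hS hT X (zero_add 1), ← map_add]
    rfl
  rw [sum_congr rfl fun k _ => matPow_mul_mul_matPow_of_add_eq_one hS hT X
      (by field_simp; ring),
    hSXT, show (1 / 2 : ℂ) = ((1 / 2 : ℝ) : ℂ) by push_cast; rfl, Complex.coe_smul, ← map_smul,
    ← map_sum, ← map_sub, show (1 / (m : ℂ)) = ((1 / m : ℝ) : ℂ) by push_cast; rfl,
    Complex.coe_smul, ← map_smul]
  congr 1; ext i j
  simp only [trapezoidRule, Pi.smul_apply, Pi.sub_apply, Finset.sum_apply, smul_eq_mul,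
    sub_self, sub_zero]
  ring

theorem eigenSchur_closedGridMean {m : ℕ} (hm : m ≠ 1) :
    eigenSchur hS hT X (fun i j =>
        closedGridMean m fun ν => hS.eigenvalues i ^ ν * hT.eigenvalues j ^ (1 - ν)) =
      (1 / (m : ℂ)) • ∑ k ∈ range m, matPow S hS ((k : ℝ) / ((m : ℝ) - 1)) * X *
        matPow T hT (((m : ℝ) - 1 - (k : ℝ)) / ((m : ℝ) - 1)) := by
  have hm' : (m : ℝ) - 1 ≠ 0 := sub_ne_zero.2 (by exact_mod_cast hm)
  rw [sum_congr rfl fun k _ => matPow_mul_mul_matPow_of_add_eq_one hS hT X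
      (by field_simp; ring),
    show (1 / (m : ℂ)) = ((1 / m : ℝ) : ℂ) by push_cast; rfl, ofReal_smul_sum_eigenSchur]
  rfl

end EigenSchur

open MeasureTheory in
theorem statement13 (n m₁ m₂ : ℕ) (hm₁ : 1 ≤ m₁) (hm₂ : 2 ≤ m₂)
    (S T X : Matrix (Fin n) (Fin n) ℂ) (hS : S.PosDef) (hT : T.PosDef) :
    frobNorm ((1 / (m₁ : ℂ)) • ∑ k ∈ Finset.Icc 1 m₁,
        matPow S hS.1 ((k : ℝ) / ((m₁ : ℝ) + 1)) * X *
          matPow T hT.1 (((m₁ : ℝ) + 1 - (k : ℝ)) / ((m₁ : ℝ) + 1)))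
      ≤ frobNorm ((1 / (m₁ : ℂ)) • ∑ k ∈ Finset.Icc 1 m₁,
        matPow S hS.1 ((2 * (k : ℝ) - 1) / (2 * (m₁ : ℝ))) * X *
          matPow T hT.1 ((2 * (m₁ : ℝ) - 2 * (k : ℝ) + 1) / (2 * (m₁ : ℝ)))) ∧
    frobNorm ((1 / (m₁ : ℂ)) • ∑ k ∈ Finset.Icc 1 m₁,
        matPow S hS.1 ((2 * (k : ℝ) - 1) / (2 * (m₁ : ℝ))) * X *
          matPow T hT.1 ((2 * (m₁ : ℝ) - 2 * (k : ℝ) + 1) / (2 * (m₁ : ℝ))))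
      ≤ frobNorm (∫ ν in (0:ℝ)..1, matPow S hS.1 ν * X * matPow T hT.1 (1 - ν)) ∧
    frobNorm (∫ ν in (0:ℝ)..1, matPow S hS.1 ν * X * matPow T hT.1 (1 - ν))
      ≤ frobNorm ((1 / (m₂ : ℂ)) • ((∑ k ∈ Finset.range (m₂ + 1),
          matPow S hS.1 ((k : ℝ) / (m₂ : ℝ)) * X *
            matPow T hT.1 (((m₂ : ℝ) - (k : ℝ)) / (m₂ : ℝ)))
        - (1 / 2 : ℂ) • (S * X + X * T))) ∧
    frobNorm ((1 / (m₂ : ℂ)) • ((∑ k ∈ Finset.range (m₂ + 1),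
          matPow S hS.1 ((k : ℝ) / (m₂ : ℝ)) * X *
            matPow T hT.1 (((m₂ : ℝ) - (k : ℝ)) / (m₂ : ℝ)))
        - (1 / 2 : ℂ) • (S * X + X * T)))
      ≤ frobNorm ((1 / (m₂ : ℂ)) • ∑ k ∈ Finset.range m₂,
          matPow S hS.1 ((k : ℝ) / ((m₂ : ℝ) - 1)) * X *
            matPow T hT.1 (((m₂ : ℝ) - 1 - (k : ℝ)) / ((m₂ : ℝ) - 1))) := by
  have hS₀ := hS.eigenvalues_pos
  have hT₀ := hT.eigenvalues_pos
  have hg i j := convexOn_rpow_mul_rpow_one_sub (hS₀ i) (hT₀ j)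
  have hg₀ i j (ν : ℝ) : 0 ≤ hS.1.eigenvalues i ^ ν * hT.1.eigenvalues j ^ (1 - ν) :=
    (mul_pos (Real.rpow_pos_of_pos (hS₀ i) ν) (Real.rpow_pos_of_pos (hT₀ j) _)).le
  have hint₀ i j :
      0 ≤ ∫ ν in (0 : ℝ)..1, hS.1.eigenvalues i ^ ν * hT.1.eigenvalues j ^ (1 - ν) :=
    intervalIntegral.integral_nonneg zero_le_one fun ν _ => hg₀ i j ν
  have hint_le i j := (hg i j).integral_le_trapezoidRule (m := m₂) (by omega)
  rw [← eigenSchur_openGridMean, ← eigenSchur_midpointRule, ← eigenSchur_integral _ _ _ hS₀ hT₀,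
    ← eigenSchur_trapezoidRule _ _ _ (by omega), ← eigenSchur_closedGridMean _ _ _ (by omega)]
  exact ⟨frobNorm_eigenSchur_le _ _ _ (fun i j => openGridMean_nonneg (hg₀ i j) m₁)
      fun i j => (hg i j).openGridMean_le_midpointRule m₁,
    frobNorm_eigenSchur_le _ _ _ (fun i j => midpointRule_nonneg (hg₀ i j) m₁)
      fun i j => (hg i j).midpointRule_le_integral hm₁,
    frobNorm_eigenSchur_le _ _ _ hint₀ hint_le,
    frobNorm_eigenSchur_le _ _ _ (fun i j => (hint₀ i j).trans (hint_le i j))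
      fun i j => (hg i j).trapezoidRule_le_closedGridMean hm₂⟩
end

section
/- The means H_{1/3} and M_{3/4} are not comparable: there exist s > 0 and t > 0 such that H_{1/3}(s, 1) > M_{3/4}(s, 1) and H_{1/3}(t, 1) < M_{3/4}(t, 1). -/
open scoped ComplexOrder

lemma pow_rpow_eq (c : ℝ) (hc : 0 < c) (n m : ℕ) (r : ℝ) (h : (n : ℝ) * r = m) :
    (c ^ n) ^ r = c ^ m := by
  rw [← Real.rpow_natCast c n, ← Real.rpow_mul hc.le, h, Real.rpow_natCast]

lemma pow_rpow_eq_neg (c : ℝ) (hc : 0 < c) (n m : ℕ) (r : ℝ) (h : (n : ℝ) * r = -(m : ℝ)) :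
    (c ^ n) ^ r = (c ^ m)⁻¹ := by
  rw [← Real.rpow_natCast c n, ← Real.rpow_mul hc.le, h, Real.rpow_neg hc.le,
    Real.rpow_natCast]

/-- The means `H_{1/3}` and `M_{3/4}` are not comparable. -/
theorem statement15 :
    ∃ s t : ℝ, 0 < s ∧ 0 < t ∧
      Mmean (3 / 4) s 1 < Hmean (1 / 3) s 1 ∧
      Hmean (1 / 3) t 1 < Mmean (3 / 4) t 1 := by
  refine ⟨(5/4 : ℝ) ^ 12, (2 : ℝ) ^ 12, by norm_num, by norm_num, ?_, ?_⟩
  · have hc : (0:ℝ) < 5/4 := by norm_num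
    have h1 : ((5/4:ℝ) ^ 12) ^ ((1:ℝ)/3) = (5/4:ℝ) ^ 4 :=
      pow_rpow_eq _ hc 12 4 _ (by norm_num)
    have h2 : ((5/4:ℝ) ^ 12) ^ ((3:ℝ)/4) = (5/4:ℝ) ^ 9 :=
      pow_rpow_eq _ hc 12 9 _ (by norm_num)
    have h3 : ((5/4:ℝ) ^ 12) ^ ((3:ℝ)/4 - 1) = ((5/4:ℝ) ^ 3)⁻¹ :=
      pow_rpow_eq_neg _ hc 12 3 _ (by norm_num)
    rw [Mmean, Hmean, if_neg (by norm_num), if_neg (by norm_num), if_neg (by norm_num),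
      mul_one, Real.one_rpow, h1, h2, h3]
    norm_num
  · have hc : (0:ℝ) < 2 := by norm_num
    have h1 : ((2:ℝ) ^ 12) ^ ((1:ℝ)/3) = (2:ℝ) ^ 4 :=
      pow_rpow_eq _ hc 12 4 _ (by norm_num)
    have h2 : ((2:ℝ) ^ 12) ^ ((3:ℝ)/4) = (2:ℝ) ^ 9 :=
      pow_rpow_eq _ hc 12 9 _ (by norm_num)
    have h3 : ((2:ℝ) ^ 12) ^ ((3:ℝ)/4 - 1) = ((2:ℝ) ^ 3)⁻¹ :=
      pow_rpow_eq_neg _ hc 12 3 _ (by norm_num)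
    rw [Mmean, Hmean, if_neg (by norm_num), if_neg (by norm_num), if_neg (by norm_num),
      mul_one, Real.one_rpow, h1, h2, h3]
    norm_num
end
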